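/- arXiv:1311.6292 — 9 statements merged into one kernel-verified Lean document; each statement's English description precedes it below -/
import Mathlib

section
/- For all integers n ≥ 1, ℓ ≥ 1 and k ≥ 0, the number of 132-avoiding permutations σ of {1,…,n} with mmp(ℓ,0,0,0)(σ) = k equals the number of Dyck paths with 2n steps having exactly k down-steps ending at height greater than or equal to ℓ. -/
/-- A permutation `σ` of `{1,…,n}` (as a permutation of `Fin n`) avoids the pattern 132 if
there are no indices `i < j < k` with `σ i < σ k < σ j`. -/
def Avoids132 (n : ℕ) (σ : Equiv.Perm (Fin n)) : Prop :=
  ∀ i j k : Fin n, i < j → j < k → ¬(σ i < σ k ∧ σ k < σ j)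

/-- `mmp n a b c d σ` is the number of indices `i` matching the marked mesh pattern
`MMP(a,b,c,d)` in `σ`: there are at least `a` indices `j > i` with `σ j > σ i`,
at least `b` indices `j < i` with `σ j > σ i`, at least `c` indices `j < i` with
`σ j < σ i`, and at least `d` indices `j > i` with `σ j < σ i`. -/
noncomputable def mmp (n a b c d : ℕ) (σ : Equiv.Perm (Fin n)) : ℕ :=
  Nat.card {i : Fin n |
    a ≤ Nat.card {j : Fin n | i < j ∧ σ i < σ j} ∧
    b ≤ Nat.card {j : Fin n | j < i ∧ σ i < σ j} ∧
    c ≤ Nat.card {j : Fin n | j < i ∧ σ j < σ i} ∧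
    d ≤ Nat.card {j : Fin n | i < j ∧ σ j < σ i}}

/-- A Dyck path, encoded as a list of booleans (`true` = up-step `(1,1)`,
`false` = down-step `(1,-1)`): every prefix has at least as many up-steps as
down-steps (never goes below the x-axis), and the total numbers of up- and
down-steps agree (the path ends on the x-axis). -/
def IsDyck (p : List Bool) : Prop :=
  (∀ i : ℕ, (p.take i).count false ≤ (p.take i).count true) ∧
    p.count false = p.count true

/-- The number of down-steps of the path `p` ending at height at least `ℓ`:
the height after step `i` is the number of up-steps minus the number of
down-steps among the first `i+1` steps. -/
noncomputable def downStepsAtLeast (ℓ : ℕ) (p : List Bool) : ℕ :=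
  Nat.card {i : Fin p.length | p.get i = false ∧
    (p.take ((i : ℕ) + 1)).count false + ℓ ≤ (p.take ((i : ℕ) + 1)).count true}

/-!
Both sides satisfy the same recursion. A nonempty 132-avoiding permutation factors uniquely as
`(α + b) max β`, every entry left of the maximum exceeding every entry right of it; a nonempty
Dyck path factors uniquely as `U P D Q` at its first return to the axis. Along either factorization
the statistic with threshold `ℓ + 1` is the statistic of the left factor with threshold `ℓ` plus
that of the right factor with threshold `ℓ + 1`: each entry of `α` gains exactly one larger entry
to its right (the maximum), and each down-step of `P` is lifted by one. With threshold `0` every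
entry, resp. every down-step, is counted, and both classes are counted by the Catalan numbers, so
the counts agree by induction on the size.
-/

open Finset Equiv

theorem natCard_add_eq_sum_antidiagonal {X Y M : Type*} [AddMonoid M] [HasAntidiagonal M]
    (f : X → M) (g : Y → M) [∀ m, Finite {x // f x = m}] [∀ m, Finite {y // g y = m}]
    (m : M) :
    Nat.card {xy : X × Y // f xy.1 + g xy.2 = m} =
      ∑ p ∈ antidiagonal m, Nat.card {x // f x = p.1} * Nat.card {y // g y = p.2} := by
  let e : {xy : X × Y // f xy.1 + g xy.2 = m} ≃
      Σ p : antidiagonal m, {x // f x = p.1.1} × {y // g y = p.1.2} :=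
    { toFun := fun xy =>
        ⟨⟨(f xy.1.1, g xy.1.2), mem_antidiagonal.2 xy.2⟩,
          ⟨xy.1.1, rfl⟩, ⟨xy.1.2, rfl⟩⟩
      invFun := fun p =>
        ⟨(p.2.1, p.2.2), by rw [p.2.1.2, p.2.2.2]; exact mem_antidiagonal.1 p.1.2⟩
      left_inv := fun _ => rfl
      right_inv := by
        rintro ⟨⟨⟨_, _⟩, _⟩, ⟨x, hx⟩, ⟨y, hy⟩⟩
        dsimp only at hx hy
        subst hx hy
        rfl }
  rw [Nat.card_congr e, Nat.card_sigma, ← sum_coe_sort (antidiagonal m)]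
  simp only [Nat.card_prod]

instance : HasAntidiagonal (ℕ × ℕ) := HasAntidiagonal.antidiagonalOfLocallyFinite

structure CatalanClass (X : Type*) where
  size : X → ℕ
  stat : ℕ → X → ℕ
  join : X → X → X
  finite_size (n : ℕ) : Finite {x // size x = n}
  card_size_zero : Nat.card {x // size x = 0} = 1
  stat_of_size_eq_zero {ℓ : ℕ} {x : X} : size x = 0 → stat ℓ x = 0
  stat_zero (x : X) : stat 0 x = size x
  size_join (x y : X) : size (join x y) = size x + size y + 1
  stat_succ_join (ℓ : ℕ) (x y : X) : stat (ℓ + 1) (join x y) = stat ℓ x + stat (ℓ + 1) y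
  join_injective2 : Function.Injective2 join
  exists_join {z : X} : size z ≠ 0 → ∃ x y, join x y = z

namespace CatalanClass

variable {X Y : Type*} (F : CatalanClass X)

noncomputable def count (ℓ n k : ℕ) : ℕ := Nat.card {x // F.size x = n ∧ F.stat ℓ x = k}

def weight (ℓ : ℕ) (x : X) : ℕ × ℕ := (F.size x, F.stat ℓ x)

instance (n : ℕ) : Finite {x // F.size x = n} := F.finite_size n

instance (ℓ : ℕ) (m : ℕ × ℕ) : Finite {x // F.weight ℓ x = m} :=
  Finite.of_injective (β := {x // F.size x = m.1}) (fun x => ⟨x.1, congrArg Prod.fst x.2⟩)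
    fun _ _ h => Subtype.ext (congrArg Subtype.val h :)

theorem count_eq_natCard_weight (ℓ n k : ℕ) :
    F.count ℓ n k = Nat.card {x // F.weight ℓ x = (n, k)} := by
  simp only [count, weight, Prod.mk.injEq]

theorem natCard_eq_natCard_pairs {M : Type*} [Add M] [IsRightCancelAdd M]
    (w u v : X → M) (e m : M) (hw : ∀ x y, w (F.join x y) = u x + v y + e)
    (hpos : ∀ z, w z = m + e → F.size z ≠ 0) :
    Nat.card {z // w z = m + e} = Nat.card {xy : X × X // u xy.1 + v xy.2 = m} := by
  refine (Nat.card_congr (ofBijective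
    (fun xy => ⟨F.join xy.1.1 xy.1.2, by rw [hw, xy.2]⟩) ⟨?_, ?_⟩)).symm
  · rintro ⟨⟨x, y⟩, _⟩ ⟨⟨x', y'⟩, _⟩ h
    obtain ⟨rfl, rfl⟩ := F.join_injective2 (congrArg Subtype.val h)
    rfl
  · rintro ⟨z, hz⟩
    obtain ⟨x, y, rfl⟩ := F.exists_join (hpos z hz)
    exact ⟨⟨(x, y), add_right_cancel (by rw [← hw, hz])⟩, rfl⟩

theorem natCard_size_eq_catalan (n : ℕ) : Nat.card {x // F.size x = n} = catalan n := by
  induction n using Nat.strong_induction_on with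
  | _ n ih =>
    rcases n with _ | n
    · rw [F.card_size_zero, catalan_zero]
    rw [F.natCard_eq_natCard_pairs F.size F.size F.size 1 n F.size_join (by omega),
      natCard_add_eq_sum_antidiagonal, catalan_succ']
    refine sum_congr rfl fun p hp => ?_
    have := mem_antidiagonal.1 hp
    rw [ih p.1 (by omega), ih p.2 (by omega)]

theorem count_succ_succ (ℓ n k : ℕ) :
    F.count (ℓ + 1) (n + 1) k =
      ∑ p ∈ antidiagonal (n, k), F.count ℓ p.1.1 p.1.2 * F.count (ℓ + 1) p.2.1 p.2.2 := by
  have hw (x y : X) :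
      F.weight (ℓ + 1) (F.join x y) = F.weight ℓ x + F.weight (ℓ + 1) y + (1, 0) := by
    simp [weight, F.size_join, F.stat_succ_join]
  rw [count_eq_natCard_weight, show ((n + 1, k) : ℕ × ℕ) = (n, k) + (1, 0) by simp,
    F.natCard_eq_natCard_pairs _ _ _ _ _ hw fun z hz => by simp_all [weight, Prod.ext_iff],
    natCard_add_eq_sum_antidiagonal]
  simp only [count_eq_natCard_weight]

theorem count_zero (n k : ℕ) : F.count 0 n k = if k = n then catalan n else 0 := by
  simp only [count, F.stat_zero]
  split_ifs with h
  · simp [h, F.natCard_size_eq_catalan]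
  · simp [show ∀ x, ¬(F.size x = n ∧ F.size x = k) by omega]

theorem count_size_zero (ℓ k : ℕ) : F.count ℓ 0 k = if k = 0 then 1 else 0 := by
  have h (x : X) : F.size x = 0 ∧ F.stat ℓ x = k ↔ F.size x = 0 ∧ k = 0 := by
    have := @F.stat_of_size_eq_zero ℓ x
    omega
  rw [count, Nat.card_congr (subtypeEquivRight h)]
  split_ifs with hk
  · simp [hk, F.card_size_zero]
  · simp [hk]

theorem count_eq (G : CatalanClass Y) (ℓ n k : ℕ) : F.count ℓ n k = G.count ℓ n k := by
  induction n using Nat.strong_induction_on generalizing ℓ k with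
  | _ n ih =>
    rcases ℓ with _ | ℓ
    · rw [F.count_zero, G.count_zero]
    rcases n with _ | n
    · rw [F.count_size_zero, G.count_size_zero]
    rw [F.count_succ_succ, G.count_succ_succ]
    refine sum_congr rfl fun p hp => ?_
    have := congrArg Prod.fst (mem_antidiagonal.1 hp)
    simp only [Prod.fst_add] at this
    rw [ih p.1.1 (by omega), ih p.2.1 (by omega)]

end CatalanClass

-- The threshold is relative to the starting height of the remaining path, hence may go negative.
def downStepsAtLeastInt : ℤ → List Bool → ℕ
  | _, [] => 0
  | t, true :: l => downStepsAtLeastInt (t - 1) l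
  | t, false :: l => (if t ≤ -1 then 1 else 0) + downStepsAtLeastInt (t + 1) l

theorem card_downSteps_eq_downStepsAtLeastInt (t : ℤ) (l : List Bool) :
    #{i : Fin l.length | l.get i = false ∧
      t + (l.take (i + 1)).count false ≤ (l.take (i + 1)).count true} =
      downStepsAtLeastInt t l := by
  induction l generalizing t with
  | nil => rfl
  | cons b l ih =>
    refine (Fin.card_filter_univ_succ (n := l.length) _).trans ?_
    cases b
    · simp [downStepsAtLeastInt, ← ih (t + 1), add_assoc, add_comm (1 : ℤ)]
      split_ifs <;> omega
    · simp [downStepsAtLeastInt, ← ih (t - 1)]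
      refine congrArg card (filter_congr fun x _ => and_congr_right fun _ => ?_)
      omega

theorem downStepsAtLeast_eq_downStepsAtLeastInt (ℓ : ℕ) (l : List Bool) :
    downStepsAtLeast ℓ l = downStepsAtLeastInt ℓ l := by
  rw [← card_downSteps_eq_downStepsAtLeastInt, downStepsAtLeast, Nat.card_eq_fintype_card,
    Fintype.card_subtype]
  refine congrArg card (filter_congr fun i _ => and_congr_right fun _ => ?_)
  omega

theorem downStepsAtLeastInt_append (t : ℤ) (l₁ l₂ : List Bool) :
    downStepsAtLeastInt t (l₁ ++ l₂) = downStepsAtLeastInt t l₁ +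
      downStepsAtLeastInt (t - ((l₁.count true : ℤ) - l₁.count false)) l₂ := by
  induction l₁ generalizing t with
  | nil => simp [downStepsAtLeastInt]
  | cons b l ih =>
    cases b <;> simp only [List.cons_append, downStepsAtLeastInt, ih, List.count_cons] <;>
      simp <;> ring_nf

def stepEquivBool : DyckStep ≃ Bool where
  toFun s := s = DyckStep.U
  invFun b := if b then DyckStep.U else DyckStep.D
  left_inv s := by cases s <;> rfl
  right_inv b := by cases b <;> rfl

theorem count_true_map_stepEquivBool (l : List DyckStep) :
    (l.map stepEquivBool).count true = l.count .U :=
  List.count_map_of_injective l _ stepEquivBool.injective .U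

theorem count_false_map_stepEquivBool (l : List DyckStep) :
    (l.map stepEquivBool).count false = l.count .D :=
  List.count_map_of_injective l _ stepEquivBool.injective .D

theorem isDyck_map_stepEquivBool (l : List DyckStep) :
    IsDyck (l.map stepEquivBool) ↔ (∀ i, (l.take i).count .D ≤ (l.take i).count .U) ∧
      l.count .U = l.count .D := by
  simp only [IsDyck, ← List.map_take, count_true_map_stepEquivBool,
    count_false_map_stepEquivBool, eq_comm]

def dyckWordEquiv : DyckWord ≃ {l : List Bool // IsDyck l} where
  toFun p := ⟨p.toList.map stepEquivBool,
    (isDyck_map_stepEquivBool _).2 ⟨p.count_D_le_count_U, p.count_U_eq_count_D⟩⟩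
  invFun l :=
    have h := (isDyck_map_stepEquivBool (l.1.map stepEquivBool.symm)).1 (by simpa using l.2)
    ⟨l.1.map stepEquivBool.symm, h.2, h.1⟩
  left_inv p := by ext1; simp
  right_inv l := by ext1; simp

namespace DyckWord

theorem count_true_sub_count_false_map_stepEquivBool (p : DyckWord) :
    ((p.toList.map stepEquivBool).count true : ℤ) -
      (p.toList.map stepEquivBool).count false = 0 := by
  rw [count_true_map_stepEquivBool, count_false_map_stepEquivBool, p.count_U_eq_count_D,
    sub_self]

theorem map_stepEquivBool_nest_add (q r : DyckWord) :
    (q.nest + r).toList.map stepEquivBool =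
      true :: (q.toList.map stepEquivBool ++ false :: r.toList.map stepEquivBool) := by
  change (([DyckStep.U] ++ q.toList ++ [DyckStep.D]) ++ r.toList).map stepEquivBool = _
  simp only [List.map_append, List.append_assoc, List.map_cons, List.singleton_append]
  rfl

theorem downStepsAtLeastInt_nest_add (t : ℤ) (q r : DyckWord) :
    downStepsAtLeastInt t ((q.nest + r).toList.map stepEquivBool) =
      downStepsAtLeastInt (t - 1) (q.toList.map stepEquivBool) + (if t ≤ 0 then 1 else 0) +
        downStepsAtLeastInt t (r.toList.map stepEquivBool) := by
  rw [map_stepEquivBool_nest_add, downStepsAtLeastInt, downStepsAtLeastInt_append,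
    count_true_sub_count_false_map_stepEquivBool, downStepsAtLeastInt, sub_zero, sub_add_cancel]
  split_ifs <;> omega

theorem eq_zero_of_semilength_eq_zero {p : DyckWord} (h : p.semilength = 0) : p = 0 := by
  rw [← toList_eq_nil, ← List.length_eq_zero_iff, ← two_mul_semilength_eq_length, h]

theorem downStepsAtLeastInt_of_nonpos {t : ℤ} (ht : t ≤ 0) (p : DyckWord) :
    downStepsAtLeastInt t (p.toList.map stepEquivBool) = p.semilength := by
  induction h : p.semilength using Nat.strong_induction_on generalizing p t with
  | _ n ih =>
    by_cases hp : p = 0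
    · subst hp
      rw [← h]
      rfl
    have hin := h ▸ semilength_insidePart_lt hp
    have hout := h ▸ semilength_outsidePart_lt hp
    rw [← nest_insidePart_add_outsidePart hp, downStepsAtLeastInt_nest_add, if_pos ht,
      ih _ hin (by omega) _ rfl, ih _ hout ht _ rfl, ← h,
      ← semilength_insidePart_add_semilength_outsidePart_add_one hp]
    ring

end DyckWord

noncomputable def dyckWordClass : CatalanClass DyckWord where
  size := DyckWord.semilength
  stat ℓ p := downStepsAtLeast ℓ (p.toList.map stepEquivBool)
  join q r := q.nest + r
  finite_size _ := inferInstance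
  card_size_zero := by
    rw [Nat.card_eq_fintype_card, DyckWord.card_dyckWord_semilength_eq_catalan, catalan_zero]
  stat_of_size_eq_zero h := by
    rw [DyckWord.eq_zero_of_semilength_eq_zero h, downStepsAtLeast_eq_downStepsAtLeastInt]
    rfl
  stat_zero p := by
    rw [downStepsAtLeast_eq_downStepsAtLeastInt, Nat.cast_zero,
      DyckWord.downStepsAtLeastInt_of_nonpos le_rfl]
  size_join q r := by
    simp only [DyckWord.semilength_add, DyckWord.semilength_nest]
    omega
  stat_succ_join ℓ q r := by
    simp only [downStepsAtLeast_eq_downStepsAtLeastInt, DyckWord.downStepsAtLeastInt_nest_add]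
    push_cast
    simp only [add_sub_cancel_right, add_zero, if_neg (by omega : ¬((ℓ : ℤ) + 1 ≤ 0))]
  join_injective2 q r q' r' h := by
    have hq := congrArg DyckWord.insidePart h
    have hr := congrArg DyckWord.outsidePart h
    simp only [DyckWord.insidePart_add DyckWord.nest_ne_zero, DyckWord.insidePart_nest,
      DyckWord.outsidePart_add DyckWord.nest_ne_zero, DyckWord.outsidePart_nest,
      zero_add] at hq hr
    exact ⟨hq, hr⟩
  exists_join h := ⟨_, _, DyckWord.nest_insidePart_add_outsidePart fun h0 => h (h0 ▸ rfl)⟩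

theorem natCard_dyck_eq_count (n ℓ k : ℕ) :
    Nat.card {p : List Bool | p.length = 2 * n ∧ IsDyck p ∧ downStepsAtLeast ℓ p = k} =
      dyckWordClass.count ℓ n k := by
  refine Nat.card_congr ((dyckWordEquiv.subtypeEquiv fun p => ?_).trans
    ((subtypeSubtypeEquivSubtypeInter IsDyck
      fun l => l.length = 2 * n ∧ downStepsAtLeast ℓ l = k).trans
      (subtypeEquivRight fun l => ?_))).symm
  · refine and_congr ?_ Iff.rfl
    simp [dyckWordEquiv, dyckWordClass, ← DyckWord.two_mul_semilength_eq_length]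
  · exact and_left_comm

def rightLarger {n : ℕ} (σ : Perm (Fin n)) (i : Fin n) : ℕ := #{j | i < j ∧ σ i < σ j}

theorem mmp_eq_card_rightLarger {n : ℕ} (ℓ : ℕ) (σ : Perm (Fin n)) :
    mmp n ℓ 0 0 0 σ = #{i | ℓ ≤ rightLarger σ i} := by
  simp only [mmp, zero_le, and_true, rightLarger, Nat.card_eq_fintype_card, Fintype.card_subtype]
  rfl

theorem val_apply_eq_card_lt {n : ℕ} (σ : Perm (Fin n)) (x : Fin n) :
    (σ x : ℕ) = #{y | σ y < σ x} := by
  rw [← Fin.card_Iio (σ x), ← filter_gt_eq_Iio]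
  exact (card_equiv σ (by simp)).symm

section Glue

variable {a b : ℕ}

def posLayout (a b : ℕ) : (Fin a ⊕ Fin 1) ⊕ Fin b ≃ Fin (a + 1 + b) :=
  (sumCongr finSumFinEquiv (Equiv.refl _)).trans finSumFinEquiv

def valLayout (a b : ℕ) : (Fin a ⊕ Fin 1) ⊕ Fin b ≃ Fin (a + 1 + b) :=
  (sumComm _ _).trans ((sumCongr (Equiv.refl _) finSumFinEquiv).trans
    (finSumFinEquiv.trans (finCongr (by omega))))

@[simp] theorem val_posLayout_inl_inl (i : Fin a) :
    (posLayout a b (.inl (.inl i)) : ℕ) = i := rfl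

@[simp] theorem val_posLayout_inl_inr (m : Fin 1) :
    (posLayout a b (.inl (.inr m)) : ℕ) = a := by
  simp [posLayout, Fin.fin_one_eq_zero m]

@[simp] theorem val_posLayout_inr (j : Fin b) : (posLayout a b (.inr j) : ℕ) = a + 1 + j := by
  simp [posLayout]

@[simp] theorem val_valLayout_inl_inl (i : Fin a) :
    (valLayout a b (.inl (.inl i)) : ℕ) = b + i := by
  simp [valLayout]
  omega

@[simp] theorem val_valLayout_inl_inr (m : Fin 1) :
    (valLayout a b (.inl (.inr m)) : ℕ) = b + a := by
  simp [valLayout, Fin.fin_one_eq_zero m]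
  omega

@[simp] theorem val_valLayout_inr (j : Fin b) : (valLayout a b (.inr j) : ℕ) = j := by
  simp [valLayout]

theorem card_filter_posLayout (P : Fin (a + 1 + b) → Prop) [DecidablePred P] :
    #{x | P x} = #{i | P (posLayout a b (.inl (.inl i)))} +
      #{m : Fin 1 | P (posLayout a b (.inl (.inr m)))} + #{j | P (posLayout a b (.inr j))} := by
  simp only [card_filter]
  rw [← (posLayout a b).sum_comp, Fintype.sum_sum_type, Fintype.sum_sum_type]

/-- In one-line notation, `glue α β` is `α` shifted up by `b`, then the maximum, then `β`. -/
def glue (α : Perm (Fin a)) (β : Perm (Fin b)) : Perm (Fin (a + 1 + b)) :=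
  (posLayout a b).symm.trans ((sumCongr (sumCongr α (Equiv.refl _)) β).trans (valLayout a b))

@[simp] theorem glue_posLayout (α : Perm (Fin a)) (β : Perm (Fin b)) (s) :
    glue α β (posLayout a b s) = valLayout a b (Sum.map (Sum.map α id) β s) := by
  simp only [glue, trans_apply, symm_apply_apply, sumCongr_apply]
  rcases s with (i | m) | j <;> rfl

theorem glue_injective {α α' : Perm (Fin a)} {β β' : Perm (Fin b)}
    (h : glue α β = glue α' β') : α = α' ∧ β = β' := by
  refine ⟨Equiv.ext fun i => Fin.ext ?_, Equiv.ext fun j => Fin.ext ?_⟩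
  · simpa using congrArg (fun σ => (σ (posLayout a b (.inl (.inl i))) : ℕ)) h
  · simpa using congrArg (fun σ => (σ (posLayout a b (.inr j)) : ℕ)) h

variable (α : Perm (Fin a)) (β : Perm (Fin b))

theorem rightLarger_glue_inl_inl (i : Fin a) :
    rightLarger (glue α β) (posLayout a b (.inl (.inl i))) = rightLarger α i + 1 := by
  simp only [rightLarger]
  rw [card_filter_posLayout]
  simp [Fin.lt_def, -Fin.val_fin_lt]
  intro x _
  omega

theorem rightLarger_glue_inl_inr (m : Fin 1) :
    rightLarger (glue α β) (posLayout a b (.inl (.inr m))) = 0 := by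
  simp only [rightLarger]
  rw [card_filter_posLayout]
  simp [Fin.lt_def, -Fin.val_fin_lt]
  intro x _
  omega

theorem rightLarger_glue_inr (j : Fin b) :
    rightLarger (glue α β) (posLayout a b (.inr j)) = rightLarger β j := by
  simp only [rightLarger]
  rw [card_filter_posLayout]
  simp [Fin.lt_def, -Fin.val_fin_lt]
  exact ⟨fun x _ => by omega, by omega⟩

theorem mmp_glue (ℓ : ℕ) :
    mmp (a + 1 + b) (ℓ + 1) 0 0 0 (glue α β) =
      mmp a ℓ 0 0 0 α + mmp b (ℓ + 1) 0 0 0 β := by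
  simp only [mmp_eq_card_rightLarger]
  rw [card_filter_posLayout]
  simp [rightLarger_glue_inl_inl, rightLarger_glue_inl_inr, rightLarger_glue_inr]

theorem avoids132_glue_iff :
    Avoids132 (a + 1 + b) (glue α β) ↔ Avoids132 a α ∧ Avoids132 b β := by
  constructor
  · intro h
    refine ⟨fun i j k hij hjk => ?_, fun i j k hij hjk => ?_⟩
    · have := h (posLayout a b (.inl (.inl i))) (posLayout a b (.inl (.inl j)))
        (posLayout a b (.inl (.inl k))) hij hjk
      simp only [Fin.lt_def, glue_posLayout, Sum.map_inl, val_valLayout_inl_inl] at this ⊢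
      omega
    · have := h (posLayout a b (.inr i)) (posLayout a b (.inr j)) (posLayout a b (.inr k))
        (by simp only [Fin.lt_def, val_posLayout_inr] at hij ⊢; omega)
        (by simp only [Fin.lt_def, val_posLayout_inr] at hjk ⊢; omega)
      simpa only [Fin.lt_def, glue_posLayout, Sum.map_inr, val_valLayout_inr] using this
  · rintro ⟨hα, hβ⟩ x y z hxy hyz
    obtain ⟨x, rfl⟩ := (posLayout a b).surjective x
    obtain ⟨y, rfl⟩ := (posLayout a b).surjective y
    obtain ⟨z, rfl⟩ := (posLayout a b).surjective z
    rcases x with (x | x) | x <;> rcases y with (y | y) | y <;> rcases z with (z | z) | z <;>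
      simp only [Fin.lt_def, glue_posLayout, Sum.map_inl, Sum.map_inr, id, val_posLayout_inl_inl,
        val_posLayout_inl_inr, val_posLayout_inr, val_valLayout_inl_inl, val_valLayout_inl_inr,
        val_valLayout_inr] at hxy hyz ⊢ <;>
      first
      | omega
      | have := hα x y z hxy hyz; simp only [Fin.lt_def] at this; omega
      | have := hβ x y z (by omega) (by omega); simp only [Fin.lt_def] at this; omega

end Glue

section Decomposition

variable {a b : ℕ} {σ : Perm (Fin (a + 1 + b))}

theorem val_apply_posLayout_lt (hmax : (σ (posLayout a b (.inl (.inr 0))) : ℕ) = a + b) {s}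
    (hs : s ≠ .inl (.inr 0)) :
    (σ (posLayout a b s) : ℕ) < a + b := by
  have : σ (posLayout a b s) ≠ σ (posLayout a b (.inl (.inr 0))) := by simpa using hs
  have := (σ (posLayout a b s)).isLt
  rw [Ne, Fin.ext_iff, hmax] at *
  omega

-- 132-avoidance with the maximum between them puts every right value below every left value.
theorem apply_posLayout_inr_lt_apply_posLayout_inl
    (hmax : (σ (posLayout a b (.inl (.inr 0))) : ℕ) = a + b) (hσ : Avoids132 (a + 1 + b) σ)
    (i : Fin a) (j : Fin b) :
    σ (posLayout a b (.inr j)) < σ (posLayout a b (.inl (.inl i))) := by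
  have hne : σ (posLayout a b (.inr j)) ≠ σ (posLayout a b (.inl (.inl i))) := by simp
  have := hσ (posLayout a b (.inl (.inl i))) (posLayout a b (.inl (.inr 0)))
    (posLayout a b (.inr j)) (by simp [Fin.lt_def]) (by simp [Fin.lt_def]; omega)
  have := val_apply_posLayout_lt hmax (s := .inr j) (by simp)
  simp only [Fin.lt_def] at this hne ⊢
  omega

theorem le_val_apply_posLayout_inl (hmax : (σ (posLayout a b (.inl (.inr 0))) : ℕ) = a + b)
    (hσ : Avoids132 (a + 1 + b) σ) (i : Fin a) : b ≤ σ (posLayout a b (.inl (.inl i))) := by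
  rw [val_apply_eq_card_lt, card_filter_posLayout,
    filter_true_of_mem fun j _ => apply_posLayout_inr_lt_apply_posLayout_inl hmax hσ i j]
  simp

theorem val_apply_posLayout_inr_lt (hmax : (σ (posLayout a b (.inl (.inr 0))) : ℕ) = a + b)
    (hσ : Avoids132 (a + 1 + b) σ) (j : Fin b) : (σ (posLayout a b (.inr j)) : ℕ) < b := by
  rw [val_apply_eq_card_lt, card_filter_posLayout,
    filter_false_of_mem fun i _ => (apply_posLayout_inr_lt_apply_posLayout_inl hmax hσ i j).asymm,
    filter_false_of_mem fun m _ => ?_]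
  · simpa using card_lt_univ_of_notMem (x := j) (by simp)
  · have := val_apply_posLayout_lt hmax (s := .inr j) (by simp)
    rw [Fin.fin_one_eq_zero m, not_lt, Fin.le_def, hmax]
    omega

theorem exists_glue_eq (hmax : (σ (posLayout a b (.inl (.inr 0))) : ℕ) = a + b)
    (hσ : Avoids132 (a + 1 + b) σ) : ∃ α β, glue α β = σ := by
  have hL := le_val_apply_posLayout_inl hmax hσ
  have hinj {s t} (h : (σ (posLayout a b s) : ℕ) = σ (posLayout a b t)) : s = t := by
    simpa using Fin.ext h
  have hα (i : Fin a) : (σ (posLayout a b (.inl (.inl i))) : ℕ) - b < a := by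
    have := val_apply_posLayout_lt hmax (s := .inl (.inl i)) (by simp)
    have := hL i
    omega
  let α : Perm (Fin a) :=
    ofBijective (fun i => ⟨σ (posLayout a b (.inl (.inl i))) - b, hα i⟩)
      (Finite.injective_iff_bijective.mp fun i i' h => by
        have := hL i
        have := hL i'
        simp only [Fin.mk.injEq] at h
        simpa using hinj (s := .inl (.inl i)) (t := .inl (.inl i')) (by omega))
  let β : Perm (Fin b) :=
    ofBijective (fun j => ⟨σ (posLayout a b (.inr j)), val_apply_posLayout_inr_lt hmax hσ j⟩)
      (Finite.injective_iff_bijective.mp fun j j' h => by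
        simpa using hinj (s := .inr j) (t := .inr j') (by simpa using h))
  refine ⟨α, β, Equiv.ext fun x => Fin.ext ?_⟩
  obtain ⟨(i | m) | j, rfl⟩ := (posLayout a b).surjective x
  · have := hL i
    simp [α]
    omega
  · rw [Fin.fin_one_eq_zero m]
    simp [hmax]
    omega
  · simp [β]

end Decomposition

abbrev Av132 (n : ℕ) := {σ : Perm (Fin n) // Avoids132 n σ}

def joinAv132 (x y : Σ n, Av132 n) : Σ n, Av132 n :=
  ⟨x.1 + 1 + y.1, glue x.2.1 y.2.1, (avoids132_glue_iff _ _).2 ⟨x.2.2, y.2.2⟩⟩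

def maxPosition (x : Σ n, Av132 n) : ℕ :=
  if h : 0 < x.1 then x.2.1.symm ⟨x.1 - 1, by omega⟩ else 0

theorem maxPosition_joinAv132 (x y : Σ n, Av132 n) : maxPosition (joinAv132 x y) = x.1 := by
  have h : (glue x.2.1 y.2.1).symm ⟨x.1 + 1 + y.1 - 1, by omega⟩ =
      posLayout x.1 y.1 (.inl (.inr 0)) := by
    rw [symm_apply_eq]
    ext
    simp
    omega
  rw [maxPosition, dif_pos (by simp [joinAv132])]
  exact (congrArg Fin.val h).trans (by simp)

noncomputable def avoids132Class : CatalanClass (Σ n, Av132 n) where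
  size x := x.1
  stat ℓ x := mmp x.1 ℓ 0 0 0 x.2.1
  join := joinAv132
  finite_size n := Finite.of_equiv _ (sigmaSubtype n).symm
  card_size_zero := by
    rw [Nat.card_congr (sigmaSubtype 0), Nat.card_eq_one_iff_unique]
    exact ⟨inferInstance, ⟨⟨1, fun i => i.elim0⟩⟩⟩
  stat_of_size_eq_zero := by
    rintro ℓ ⟨n, σ, hσ⟩ (rfl : n = 0)
    simp [mmp]
  stat_zero x := by simp [mmp]
  size_join _ _ := Nat.add_right_comm _ _ _
  stat_succ_join ℓ x y := mmp_glue _ _ ℓ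
  join_injective2 := by
    rintro ⟨a, α, hα⟩ ⟨a', α', hα'⟩ ⟨b, β, hβ⟩ ⟨b', β', hβ'⟩ h
    obtain rfl : a = a' := by simpa [maxPosition_joinAv132] using congrArg maxPosition h
    obtain rfl : b = b' := by
      have := congrArg Sigma.fst h
      simp only [joinAv132] at this
      omega
    simp only [joinAv132, Sigma.mk.injEq, heq_eq_eq, Subtype.mk.injEq, true_and] at h
    obtain ⟨rfl, rfl⟩ := glue_injective h
    exact ⟨rfl, rfl⟩
  exists_join := by
    rintro ⟨N, σ, hσ⟩ (hN : N ≠ 0)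
    obtain ⟨a, ha⟩ : ∃ a, (σ.symm ⟨N - 1, by omega⟩ : ℕ) = a := ⟨_, rfl⟩
    have := (σ.symm ⟨N - 1, by omega⟩).isLt
    obtain ⟨b, rfl⟩ : ∃ b, N = a + 1 + b := ⟨N - 1 - a, by omega⟩
    have hmax : (σ (posLayout a b (.inl (.inr 0))) : ℕ) = a + b := by
      have : σ.symm ⟨a + 1 + b - 1, by omega⟩ = posLayout a b (.inl (.inr 0)) :=
        Fin.ext (by simpa using ha)
      rw [← this, apply_symm_apply, Fin.val_mk]
      omega
    obtain ⟨α, β, rfl⟩ := exists_glue_eq hmax hσ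
    obtain ⟨hα, hβ⟩ := (avoids132_glue_iff α β).1 hσ
    exact ⟨⟨a, α, hα⟩, ⟨b, β, hβ⟩, rfl⟩

theorem natCard_avoids132_eq_count (n ℓ k : ℕ) :
    Nat.card {σ : Perm (Fin n) | Avoids132 n σ ∧ mmp n ℓ 0 0 0 σ = k} =
      avoids132Class.count ℓ n k := by
  show Nat.card {σ // Avoids132 n σ ∧ mmp n ℓ 0 0 0 σ = k} =
    Nat.card {x : Σ n, Av132 n // x.1 = n ∧ mmp x.1 ℓ 0 0 0 x.2.1 = k}
  refine Nat.card_congr ((subtypeSubtypeEquivSubtypeInter (fun x : Σ n, Av132 n => x.1 = n)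
    fun x => mmp x.1 ℓ 0 0 0 x.2.1 = k).symm.trans ((subtypeEquiv (sigmaSubtype n) ?_).trans
      (subtypeSubtypeEquivSubtypeInter (Avoids132 n) fun σ => mmp n ℓ 0 0 0 σ = k))).symm
  rintro ⟨⟨m, σ⟩, rfl⟩
  rfl

theorem card_mmpQuadI_eq_card_dyck_general (n ℓ k : ℕ) :
    Nat.card {σ : Equiv.Perm (Fin n) | Avoids132 n σ ∧ mmp n ℓ 0 0 0 σ = k} =
    Nat.card {p : List Bool | p.length = 2 * n ∧ IsDyck p ∧ downStepsAtLeast ℓ p = k} := by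
  rw [natCard_avoids132_eq_count, natCard_dyck_eq_count]
  exact avoids132Class.count_eq dyckWordClass ℓ n k

/-- The number of 132-avoiding permutations of `{1,…,n}` with `mmp(ℓ,0,0,0)(σ) = k`
equals the number of Dyck paths with `2n` steps having exactly `k` down-steps ending
at height at least `ℓ`. -/
theorem card_mmpQuadI_eq_card_dyck (n ℓ k : ℕ) (hn : 1 ≤ n) (hℓ : 1 ≤ ℓ) :
    Nat.card {σ : Equiv.Perm (Fin n) | Avoids132 n σ ∧ mmp n ℓ 0 0 0 σ = k} =
    Nat.card {p : List Bool | p.length = 2 * n ∧ IsDyck p ∧ downStepsAtLeast ℓ p = k} :=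
  card_mmpQuadI_eq_card_dyck_general n ℓ k
end

section
/- If σ = σ_1…σ_n is a 132-avoiding permutation of {1,…,n} with n ≥ 1, then mmp(0,1,0,0)(σ) = σ_1 − 1; that is, the number of indices i such that some j < i has σ_j > σ_i equals the first value of σ minus one. -/
theorem Fin.natCard_setOf_lt {n : ℕ} (v : Fin n) : Nat.card {w : Fin n | w < v} = v := by
  rw [Nat.card_coe_set_eq, ← Fin.card_Iio, ← Set.ncard_coe_finset, Finset.coe_Iio]
  rfl

theorem Equiv.Perm.natCard_setOf_apply_lt {n : ℕ} (σ : Equiv.Perm (Fin n)) (v : Fin n) :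
    Nat.card {i : Fin n | σ i < v} = v := by
  rw [← Fin.natCard_setOf_lt v]
  exact Nat.card_congr (σ.subtypeEquiv fun _ => Iff.rfl)

theorem Avoids132.exists_earlier_greater_iff {n : ℕ} {σ : Equiv.Perm (Fin n)}
    (hσ : Avoids132 n σ) (hn : 1 ≤ n) (i : Fin n) :
    (∃ j < i, σ i < σ j) ↔ σ i < σ ⟨0, hn⟩ := by
  set z : Fin n := ⟨0, hn⟩
  have hz : ∀ j, z ≤ j := fun j => Fin.mk_le_of_le_val (Nat.zero_le _)
  constructor
  · rintro ⟨j, hji, hij⟩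
    by_contra! hzi
    have hzi : σ z < σ i := hzi.lt_of_ne fun h => by
      have := σ.injective h; subst this; exact (hz j).not_gt hji
    have hzj : z < j := (hz j).lt_of_ne (by rintro rfl; exact hzi.not_gt hij)
    exact hσ z j i hzj hji ⟨hzi, hij⟩
  · intro h
    exact ⟨z, (hz i).lt_of_ne (by rintro rfl; exact h.false), h⟩

/-- For a 132-avoiding permutation `σ` of `{1,…,n}`, `mmp(0,1,0,0)(σ) = σ₁ - 1`: the
number of indices `i` such that some `j < i` has `σ j > σ i` equals the first value of
`σ` minus one (which, in the 0-based encoding by `Fin n`, is `(σ ⟨0, hn⟩ : ℕ)`). -/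
theorem mmp0100_eq_first_value_sub_one (n : ℕ) (hn : 1 ≤ n) (σ : Equiv.Perm (Fin n))
    (hσ : Avoids132 n σ) :
    mmp n 0 1 0 0 σ = (σ ⟨0, hn⟩ : ℕ) := by
  have hmatch : ∀ i : Fin n,
      1 ≤ Nat.card {j : Fin n | j < i ∧ σ i < σ j} ↔ σ i < σ ⟨0, hn⟩ := fun i => by
    rw [Nat.one_le_iff_ne_zero, ← Nat.pos_iff_ne_zero, Nat.card_coe_set_eq, Set.ncard_pos,
      ← hσ.exists_earlier_greater_iff hn]
    rfl
  simp only [mmp, zero_le, true_and, and_true, hmatch]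
  exact σ.natCard_setOf_apply_lt _
end

section
/- Let σ = σ_1…σ_n be a 132-avoiding permutation of {1,…,n} and let 1 ≤ ℓ < i ≤ n. Then there are at least ℓ indices j < i with σ_j > σ_i (i.e. index i matches MMP(0,ℓ,0,0) in σ) if and only if σ_i < σ_j for every j with 1 ≤ j ≤ ℓ. -/
/- If some `σ j` with `j < i` lies below `σ i`, then 132-avoidance forces every larger value
before `i` to sit before `j`, so fewer than `j` of them exist. Conversely, if the first `ℓ`
values all exceed `σ i`, they alone supply `ℓ` larger values before `i`. -/

lemma Fin.le_card_of_forall_lt {n ℓ : ℕ} (hℓ : ℓ ≤ n) {p : Fin n → Prop}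
    (hp : ∀ j : Fin n, (j : ℕ) < ℓ → p j) : ℓ ≤ Nat.card {j : Fin n | p j} := by
  have hinj : Function.Injective
      (fun m : Fin ℓ => (⟨Fin.castLE hℓ m, hp _ m.isLt⟩ : {j : Fin n | p j})) :=
    fun a b hab => Fin.castLE_injective hℓ (congrArg Subtype.val hab)
  exact (Nat.card_fin ℓ).symm.trans_le (Nat.card_le_card_of_injective _ hinj)

namespace Avoids132

variable {n : ℕ} {σ : Equiv.Perm (Fin n)}

lemma lt_of_lt_of_apply_lt (hσ : Avoids132 n σ) {i j k : Fin n} (hσji : σ j < σ i)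
    (hki : k < i) (hσik : σ i < σ k) : k < j := by
  rcases lt_trichotomy k j with hkj | rfl | hjk
  · exact hkj
  · exact absurd hσji hσik.asymm
  · exact absurd ⟨hσji, hσik⟩ (hσ j k i hjk hki)

lemma card_larger_before_le (hσ : Avoids132 n σ) {i j : Fin n} (hσji : σ j < σ i) :
    Nat.card {k : Fin n | k < i ∧ σ i < σ k} ≤ j :=
  calc Nat.card {k : Fin n | k < i ∧ σ i < σ k}
      ≤ Nat.card (Set.Iio j) :=
        Nat.card_mono (Set.toFinite _) fun _ ⟨hki, hσik⟩ => hσ.lt_of_lt_of_apply_lt hσji hki hσik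
    _ = j := by simp [Nat.card_eq_fintype_card]

end Avoids132

/-- Here `i : Fin n` is 0-based, so `ℓ ≤ i` is the 1-based condition `ℓ < i`. -/
theorem mmp_0l00_match_iff_general (n ℓ : ℕ) (σ : Equiv.Perm (Fin n)) (hσ : Avoids132 n σ)
    (i : Fin n) (hi : ℓ ≤ (i : ℕ)) :
    ℓ ≤ Nat.card {j : Fin n | j < i ∧ σ i < σ j} ↔
      ∀ j : Fin n, (j : ℕ) < ℓ → σ i < σ j := by
  constructor
  · intro hcard j hj
    have hji : j ≠ i := Fin.ne_of_lt (Fin.lt_def.mpr (hj.trans_le hi))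
    by_contra hσij
    have hσji : σ j < σ i := (not_lt.mp hσij).lt_of_ne (σ.injective.ne hji)
    have := hσ.card_larger_before_le hσji
    omega
  · intro hfirst
    exact Fin.le_card_of_forall_lt (hi.trans i.is_lt.le)
      fun j hj => ⟨Fin.lt_def.mpr (hj.trans_le hi), hfirst j hj⟩

/-- For a 132-avoiding permutation `σ` and `1 ≤ ℓ < i ≤ n` (in 1-based terms; here
`i : Fin n` is 0-based, so the hypothesis is `ℓ ≤ i`), index `i` matches
`MMP(0,ℓ,0,0)`, i.e. there are at least `ℓ` indices `j < i` with `σ j > σ i`,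
if and only if `σ i < σ j` for every one of the first `ℓ` positions `j`. -/
theorem mmp_0l00_match_iff (n ℓ : ℕ) (σ : Equiv.Perm (Fin n)) (hσ : Avoids132 n σ)
    (hℓ : 1 ≤ ℓ) (i : Fin n) (hi : ℓ ≤ (i : ℕ)) :
    ℓ ≤ Nat.card {j : Fin n | j < i ∧ σ i < σ j} ↔
      ∀ j : Fin n, (j : ℕ) < ℓ → σ i < σ j :=
  mmp_0l00_match_iff_general n ℓ σ hσ i hi
end

section
/- For all integers 1 ≤ ℓ ≤ n and k ≥ 0, the number of 132-avoiding permutations σ of {1,…,n} with mmp(0,ℓ,0,0)(σ) = k equals the number of 132-avoiding permutations σ of {1,…,n} such that the first entry of pack(σ_ℓ σ_{ℓ+1} … σ_n), the packed suffix of length n + 1 − ℓ, equals k + 1. -/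
/-- `packVal w i` is the `i`-th entry of `pack w`, the packing of the sequence `w` of
distinct integers: each entry is replaced by its rank, `1 +` the number of strictly
smaller entries (so the `i`-th smallest entry is replaced by `i`). -/
noncomputable def packVal {m : ℕ} (w : Fin m → ℕ) (i : Fin m) : ℕ :=
  1 + Nat.card {j : Fin m | w j < w i}

open Finset

lemma Nat.card_setOf_eq_card_filter {α : Type*} [Fintype α] (P : α → Prop) [DecidablePred P] :
    Nat.card {x | P x} = #{x | P x} := by
  rw [Nat.card_eq_fintype_card, Fintype.card_subtype]
  simp only [Set.mem_ofPred_eq]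

namespace Avoids132

variable {n : ℕ} {σ : Equiv.Perm (Fin n)}

lemma lt_apply_of_lt_of_lt (h : Avoids132 n σ) {i j j' : Fin n} (hjj' : j < j') (hj'i : j' < i)
    (hσ : σ i < σ j') : σ i < σ j := by
  by_contra hle
  have hne : σ j ≠ σ i := σ.injective.ne (hjj'.trans hj'i).ne
  exact h j j' i hjj' hj'i ⟨lt_of_le_of_ne (not_lt.1 hle) hne, hσ⟩

lemma lt_card_larger_before_iff (h : Avoids132 n σ) (p i : Fin n) :
    (p : ℕ) < #{j | j < i ∧ σ i < σ j} ↔ p < i ∧ σ i < σ p := by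
  constructor
  · intro hcard
    by_contra hp
    have hsub : ({j | j < i ∧ σ i < σ j} : Finset (Fin n)) ⊆ Iio p := by
      intro j hj
      simp only [mem_filter_univ] at hj
      simp only [mem_Iio]
      by_contra hpj
      rcases (not_lt.1 hpj).eq_or_lt with rfl | hlt
      · exact hp hj
      · exact hp ⟨hlt.trans hj.1, h.lt_apply_of_lt_of_lt hlt hj.1 hj.2⟩
    have := card_le_card hsub
    rw [Fin.card_Iio] at this
    omega
  · rintro ⟨hpi, hσ⟩
    have hsub : Iic p ⊆ ({j | j < i ∧ σ i < σ j} : Finset (Fin n)) := by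
      intro j hj
      simp only [mem_Iic] at hj
      simp only [mem_filter_univ]
      rcases hj.eq_or_lt with rfl | hlt
      · exact ⟨hpi, hσ⟩
      · exact ⟨hlt.trans hpi, h.lt_apply_of_lt_of_lt hlt hpi hσ⟩
    have := card_le_card hsub
    rw [Fin.card_Iic] at this
    omega

lemma mmp0l00_eq_card (h : Avoids132 n σ) {ℓ : ℕ} (hℓ : 1 ≤ ℓ) (hn : ℓ ≤ n) :
    mmp n 0 ℓ 0 0 σ = #{i : Fin n | ℓ - 1 < (i : ℕ) ∧ σ i < σ ⟨ℓ - 1, by omega⟩} := by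
  have hcount (i : Fin n) : ℓ ≤ #{j | j < i ∧ σ i < σ j} ↔
      ℓ - 1 < (i : ℕ) ∧ σ i < σ ⟨ℓ - 1, by omega⟩ := by
    have key := h.lt_card_larger_before_iff ⟨ℓ - 1, by omega⟩ i
    exact ⟨fun hc => key.1 (show ℓ - 1 < _ by omega), fun hc => Nat.le_of_pred_lt (key.2 hc)⟩
  simp only [mmp, Nat.zero_le, true_and, and_true, Nat.card_setOf_eq_card_filter, hcount]

end Avoids132

lemma packVal_suffix_zero {n p m : ℕ} (hpm : p + m = n) (hm : 0 < m) (w : Fin n → ℕ) :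
    packVal (fun j : Fin m => w ⟨p + j, by omega⟩) ⟨0, hm⟩ =
      1 + #{i : Fin n | p < (i : ℕ) ∧ w i < w ⟨p, by omega⟩} := by
  rw [packVal, Nat.card_setOf_eq_card_filter]
  congr 1
  refine card_nbij' (fun j => ⟨p + j, by omega⟩) (fun i => ⟨(i : ℕ) - p, by omega⟩) ?_ ?_ ?_ ?_
  · intro j hj
    simp only [mem_coe, mem_filter_univ, add_zero] at hj ⊢
    have hj0 : (j : ℕ) ≠ 0 := fun hj0 => by simp [hj0] at hj
    exact ⟨by omega, hj⟩
  · intro i hi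
    simp only [mem_coe, mem_filter_univ, add_zero] at hi ⊢
    have hshift : (⟨p + (i - p), by omega⟩ : Fin n) = i := Fin.ext (by simp; omega)
    rw [hshift]
    exact hi.2
  · intro j _
    ext
    simp
  · intro i hi
    simp only [mem_coe, mem_filter_univ] at hi
    ext
    simp only
    omega

/-- For `1 ≤ ℓ ≤ n`, the number of 132-avoiding permutations `σ` of `{1,…,n}` with
`mmp(0,ℓ,0,0)(σ) = k` equals the number of 132-avoiding permutations `σ` of `{1,…,n}`
whose packed suffix of length `n + 1 - ℓ` (the packing of `σ_ℓ σ_{ℓ+1} … σ_n`, written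
here 0-based) begins with the value `k + 1`. -/
theorem card_mmp0l00_eq_card_packed_suffix (n ℓ k : ℕ) (hℓ : 1 ≤ ℓ) (hn : ℓ ≤ n) :
    Nat.card {σ : Equiv.Perm (Fin n) | Avoids132 n σ ∧ mmp n 0 ℓ 0 0 σ = k} =
    Nat.card {σ : Equiv.Perm (Fin n) | Avoids132 n σ ∧
      packVal (fun j : Fin (n + 1 - ℓ) =>
          ((σ ⟨ℓ - 1 + (j : ℕ), by have := j.isLt; omega⟩ : Fin n) : ℕ))
        ⟨0, by omega⟩ = k + 1} := by
  congr 3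
  ext σ
  refine and_congr_right fun h => ?_
  rw [packVal_suffix_zero (p := ℓ - 1) (w := fun i => (σ i : ℕ)) (by omega), h.mmp0l00_eq_card hℓ hn]
  simp only [Fin.val_fin_lt]
  omega
end

section
/- For every n ≥ 1, the map φ sending a 132-avoiding permutation σ of {1,…,n} to the sequence φ(σ) = (mmp(0,n,0,0)(σ)+1, mmp(0,n−1,0,0)(σ)+1, …, mmp(0,1,0,0)(σ)+1) is a bijection from the set of 132-avoiding permutations of {1,…,n} onto the set of non-decreasing parking functions of length n. -/
/-- A non-decreasing parking function of length `n`, written as `f : Fin n → ℕ` (0-based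
positions, values in `{1,…,n}`): `f` is weakly increasing and `1 ≤ f i ≤ i + 1` for all
`i` (in 1-based terms, `f(i) ≤ i`, which also forces the values to lie in `{1,…,n}`). -/
def NDParking (n : ℕ) (f : Fin n → ℕ) : Prop :=
  Monotone f ∧ ∀ i : Fin n, 1 ≤ f i ∧ f i ≤ (i : ℕ) + 1

/-!
In a 132-avoiding permutation `σ` of `{0, …, n-1}`, an entry `σ i` has at least `p + 1` larger
entries before it iff it is smaller than all of `σ 0, …, σ p`: an entry `σ j ≤ σ i` with `j ≤ p`
would form a 132 with any larger entry between it and `i`. Hence `mmp(0, p+1, 0, 0)(σ)` is the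
prefix minimum `min(σ 0, …, σ p)`, and `φ(σ)` is the reversed sequence of prefix minima (shifted
by one), which is a non-decreasing parking function by pigeonhole.

Avoiding 132 also forces `σ p` to be the least value not among `σ 0, …, σ (p-1)` that is at least
the prefix minimum up to `p`; so `σ` is determined by its prefix minima. Conversely, for any
antitone `M` with `M p + p < n`, choosing `σ p` greedily by this rule yields a 132-avoiding
permutation whose prefix minima are `M`.
-/

open Finset

variable {n : ℕ}

def prefixMin (σ : Fin n → Fin n) (p : Fin n) : ℕ :=
  (Iic p).inf' nonempty_Iic fun j => (σ j : ℕ)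

section prefixMin

variable (σ : Fin n → Fin n)

lemma le_prefixMin_iff {p : Fin n} {a : ℕ} : a ≤ prefixMin σ p ↔ ∀ j ≤ p, a ≤ σ j := by
  simp [prefixMin, le_inf'_iff]

lemma lt_prefixMin_iff {p : Fin n} {a : ℕ} : a < prefixMin σ p ↔ ∀ j ≤ p, a < σ j := by
  simp [prefixMin, lt_inf'_iff]

lemma prefixMin_le {p j : Fin n} (hj : j ≤ p) : prefixMin σ p ≤ σ j :=
  inf'_le _ (mem_Iic.2 hj)

lemma exists_eq_prefixMin (p : Fin n) : ∃ j ≤ p, (σ j : ℕ) = prefixMin σ p := by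
  obtain ⟨j, hj, h⟩ := exists_mem_eq_inf' nonempty_Iic fun j => (σ j : ℕ)
  exact ⟨j, mem_Iic.1 hj, h.symm⟩

lemma prefixMin_antitone : Antitone (prefixMin σ) := fun _ _ hpq =>
  inf'_mono _ (Iic_subset_Iic.2 hpq) nonempty_Iic

lemma prefixMin_add_lt (hσ : Function.Injective σ) (p : Fin n) : prefixMin σ p + p < n := by
  have hsub : (Iic p).image (fun j => (σ j : ℕ)) ⊆ Ico (prefixMin σ p) n := by
    simp only [subset_iff, mem_image, mem_Iic, mem_Ico]
    rintro _ ⟨j, hj, rfl⟩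
    exact ⟨prefixMin_le σ hj, (σ j).isLt⟩
  have := card_le_card hsub
  rw [card_image_of_injective (f := fun j => (σ j : ℕ)) _ (Fin.val_injective.comp hσ),
    Fin.card_Iic, Nat.card_Ico] at this
  omega

lemma ndParking_prefixMin_rev (hσ : Function.Injective σ) :
    NDParking n fun i => prefixMin σ i.rev + 1 := by
  refine ⟨fun i j hij => Nat.add_le_add_right (prefixMin_antitone σ (Fin.rev_anti hij)) 1,
    fun i => ⟨le_add_self, ?_⟩⟩
  dsimp only
  have := prefixMin_add_lt σ hσ i.rev
  rw [Fin.val_rev] at this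
  omega

end prefixMin

namespace Avoids132

variable {σ τ : Equiv.Perm (Fin n)}

lemma succ_le_card_greater_before_iff (hσ : Avoids132 n σ) (p i : Fin n) :
    p + 1 ≤ #{j | j < i ∧ σ i < σ j} ↔ (σ i : ℕ) < prefixMin σ p := by
  rw [lt_prefixMin_iff]
  constructor
  · intro hcard j hjp
    by_contra! hji
    rw [Fin.val_fin_le] at hji
    have hsub : ({k | k < i ∧ σ i < σ k} : Finset (Fin n)) ⊆ Iio j := by
      intro k hk
      simp only [mem_filter, mem_univ, true_and, mem_Iio] at hk ⊢
      by_contra! hjk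
      have hjk' : j < k := lt_of_le_of_ne hjk (by rintro rfl; exact hk.2.not_ge hji)
      have hji' : σ j < σ i := lt_of_le_of_ne hji (σ.injective.ne (hjk'.trans hk.1).ne)
      exact hσ j k i hjk' hk.1 ⟨hji', hk.2⟩
    have := card_le_card hsub
    rw [Fin.card_Iio] at this
    omega
  · intro h
    have hpi : p < i := lt_of_not_ge fun hip => lt_irrefl _ (h i hip)
    calc (p : ℕ) + 1 = #(Iic p) := (Fin.card_Iic p).symm
      _ ≤ _ := card_le_card fun j hj => by
        simp only [mem_Iic, mem_filter, mem_univ, true_and] at hj ⊢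
        exact ⟨hj.trans_lt hpi, h j hj⟩

lemma mmp_eq_prefixMin (hσ : Avoids132 n σ) (p : Fin n) :
    mmp n 0 (p + 1) 0 0 σ = prefixMin σ p := by
  have hm := prefixMin_add_lt σ σ.injective p
  calc mmp n 0 (p + 1) 0 0 σ = #{i | (σ i : ℕ) < prefixMin σ p} := by
        simp [mmp, Nat.card_eq_fintype_card, Fintype.card_subtype,
          hσ.succ_le_card_greater_before_iff]
    _ = #{v : Fin n | (v : ℕ) < prefixMin σ p} := card_equiv σ (by simp)
    _ = prefixMin σ p := by rw [Fin.card_filter_val_lt]; omega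

lemma mmp_sub_eq_prefixMin_rev (hσ : Avoids132 n σ) (i : Fin n) :
    mmp n 0 (n - i) 0 0 σ = prefixMin σ i.rev := by
  rw [← hσ.mmp_eq_prefixMin, Fin.val_rev]
  congr 1
  omega

lemma le_of_prefixMin_le (hσ : Avoids132 n σ) {p k : Fin n} (hpk : p ≤ k)
    (hk : prefixMin σ p ≤ σ k) : σ p ≤ σ k := by
  obtain ⟨j, hjp, hj⟩ := exists_eq_prefixMin σ p
  by_contra! hkp
  have hjp' : j < p := lt_of_le_of_ne hjp (by rintro rfl; rw [Fin.lt_def] at hkp; omega)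
  have hpk' : p < k := lt_of_le_of_ne hpk (by rintro rfl; exact lt_irrefl _ hkp)
  have hjk : σ j < σ k := lt_of_le_of_ne (by rw [Fin.le_def]; omega)
    (σ.injective.ne (hjp'.trans hpk').ne)
  exact hσ j p k hjp' hpk' ⟨hjk, hkp⟩

lemma apply_le_of_eqOn_Iio (hσ : Avoids132 n σ) {p : Fin n} (h : ∀ j < p, σ j = τ j)
    (hp : prefixMin σ p = prefixMin τ p) : σ p ≤ τ p := by
  set k := σ.symm (τ p)
  have hσk : σ k = τ p := σ.apply_symm_apply _
  have hpk : p ≤ k := by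
    by_contra! hkp
    exact hkp.ne (τ.injective ((h k hkp).symm.trans hσk))
  rw [← hσk]
  exact hσ.le_of_prefixMin_le hpk (hσk ▸ hp ▸ prefixMin_le τ le_rfl)

lemma eq_of_prefixMin_eq (hσ : Avoids132 n σ) (hτ : Avoids132 n τ)
    (h : prefixMin σ = prefixMin τ) : σ = τ := by
  ext p : 1
  induction p using WellFoundedLT.induction with
  | _ p ih =>
    exact le_antisymm (hσ.apply_le_of_eqOn_Iio ih (congrFun h p))
      (hτ.apply_le_of_eqOn_Iio (fun j hj => (ih j hj).symm) (congrFun h p).symm)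

end Avoids132

section greedy

variable (M : Fin n → ℕ)

noncomputable def greedy (p : Fin n) : ℕ :=
  sInf {v | M p ≤ v ∧ ∀ q < p, greedy q ≠ v}
termination_by p

lemma greedy_spec (p : Fin n) : M p ≤ greedy M p ∧ ∀ q < p, greedy M q ≠ greedy M p := by
  obtain ⟨v, hv, hMv⟩ := (Set.finite_range (greedy M)).infinite_compl.exists_gt (M p)
  have hne : {v | M p ≤ v ∧ ∀ q < p, greedy M q ≠ v}.Nonempty :=
    ⟨v, hMv.le, fun q _ hq => hv ⟨q, hq⟩⟩
  rw [greedy]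
  exact Nat.sInf_mem hne

lemma greedy_le {p : Fin n} {v : ℕ} (hv : M p ≤ v) (hq : ∀ q < p, greedy M q ≠ v) :
    greedy M p ≤ v := by
  rw [greedy]
  exact Nat.sInf_le ⟨hv, hq⟩

lemma greedy_injective : Function.Injective (greedy M) := by
  intro p q h
  by_contra hpq
  rcases lt_or_gt_of_ne hpq with hlt | hlt
  · exact (greedy_spec M q).2 p hlt h
  · exact (greedy_spec M p).2 q hlt h.symm

lemma greedy_lt {p : Fin n} (hM : M p + p < n) : greedy M p < n := by
  have hcard : #((Iio p).image (greedy M)) < #(Ico (M p) n) := by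
    calc _ ≤ #(Iio p) := card_image_le
      _ = p := Fin.card_Iio p
      _ < _ := by rw [Nat.card_Ico]; omega
  obtain ⟨v, hv, hvim⟩ := exists_mem_notMem_of_card_lt_card hcard
  rw [mem_Ico] at hv
  calc greedy M p ≤ v :=
        greedy_le M hv.1 fun q hq hqv => hvim (mem_image.2 ⟨q, mem_Iio.2 hq, hqv⟩)
    _ < n := hv.2

lemma exists_greedy_eq (p : Fin n) : ∃ q ≤ p, greedy M q = M p := by
  by_cases h : ∃ q < p, greedy M q = M p
  · obtain ⟨q, hq, hqp⟩ := h
    exact ⟨q, hq.le, hqp⟩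
  · push Not at h
    exact ⟨p, le_rfl, le_antisymm (greedy_le M le_rfl h) (greedy_spec M p).1⟩

variable {M}

lemma greedy_avoids132 (hM : Antitone M) {i j k : Fin n} (hij : i < j) (hjk : j < k) :
    ¬(greedy M i < greedy M k ∧ greedy M k < greedy M j) := by
  rintro ⟨hik, hkj⟩
  have : greedy M j ≤ greedy M k :=
    greedy_le M ((hM hij.le).trans ((greedy_spec M i).1.trans hik.le))
      fun q hq => (greedy_injective M).ne (hq.trans hjk).ne
  omega

end greedy

theorem exists_avoids132_prefixMin_eq {M : Fin n → ℕ} (hM : Antitone M)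
    (hlt : ∀ p, M p + p < n) : ∃ σ : Equiv.Perm (Fin n), Avoids132 n σ ∧ prefixMin σ = M := by
  let g : Fin n → Fin n := fun p => ⟨greedy M p, greedy_lt M (hlt p)⟩
  have hg : Function.Injective g := fun p q h => greedy_injective M (congrArg Fin.val h)
  let σ := Equiv.ofBijective g (Finite.injective_iff_bijective.1 hg)
  refine ⟨σ, fun i j k hij hjk => greedy_avoids132 hM hij hjk, funext fun p => le_antisymm ?_ ?_⟩
  · obtain ⟨q, hq, hqp⟩ := exists_greedy_eq M p
    exact hqp ▸ prefixMin_le σ hq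
  · exact (le_prefixMin_iff σ).2 fun j hj => (hM hj).trans (greedy_spec M j).1

theorem bijOn_phi_avoid132_ndParking_general (n : ℕ) :
    Set.BijOn
      (fun σ : Equiv.Perm (Fin n) => fun i : Fin n => mmp n 0 (n - (i : ℕ)) 0 0 σ + 1)
      {σ : Equiv.Perm (Fin n) | Avoids132 n σ}
      {f : Fin n → ℕ | NDParking n f} := by
  refine ⟨fun σ hσ => ?_, fun σ hσ τ hτ h => ?_, fun f ⟨hmono, hbound⟩ => ?_⟩
  · beta_reduce
    simp only [hσ.mmp_sub_eq_prefixMin_rev]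
    exact ndParking_prefixMin_rev σ σ.injective
  · beta_reduce at h
    simp only [hσ.mmp_sub_eq_prefixMin_rev, hτ.mmp_sub_eq_prefixMin_rev] at h
    refine hσ.eq_of_prefixMin_eq hτ (funext fun p => ?_)
    simpa using congrFun h p.rev
  · obtain ⟨σ, hσ, hM⟩ := exists_avoids132_prefixMin_eq (M := fun p => f p.rev - 1)
      (fun p q hpq => Nat.sub_le_sub_right (hmono (Fin.rev_anti hpq)) 1)
      (fun p => by have := (hbound p.rev).2; rw [Fin.val_rev] at this; omega)
    refine ⟨σ, hσ, ?_⟩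
    beta_reduce
    funext i
    simp only [hσ.mmp_sub_eq_prefixMin_rev, hM, Fin.rev_rev]
    have := (hbound i).1
    omega

/-- The map `φ` sending a 132-avoiding permutation `σ` of `{1,…,n}` to the sequence
`(mmp(0,n,0,0)(σ)+1, mmp(0,n-1,0,0)(σ)+1, …, mmp(0,1,0,0)(σ)+1)` (whose entry at 0-based
position `i` is `mmp(0, n - i, 0, 0)(σ) + 1`) is a bijection from the set of 132-avoiding
permutations of `{1,…,n}` onto the set of non-decreasing parking functions of length `n`. -/
theorem bijOn_phi_avoid132_ndParking (n : ℕ) (hn : 1 ≤ n) :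
    Set.BijOn
      (fun σ : Equiv.Perm (Fin n) => fun i : Fin n => mmp n 0 (n - (i : ℕ)) 0 0 σ + 1)
      {σ : Equiv.Perm (Fin n) | Avoids132 n σ}
      {f : Fin n → ℕ | NDParking n f} :=
  bijOn_phi_avoid132_ndParking_general n
end

section
/- For all integers n ≥ 1 and 0 ≤ k ≤ n−1, the number of 132-avoiding permutations σ of {1,…,n} containing exactly k values having at least one greater value on their left (i.e. with mmp(0,1,0,0)(σ) = k) equals the Catalan triangle number C(n,k) = ((n−k)/n)·binomial(n+k−1, k). -/
/-!
In a 132-avoiding permutation an entry has a larger entry to its left exactly when it is smaller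
than the first entry, so `mmp(0,1,0,0)(σ) = σ 0`. Deleting the first entry `k` of a permutation and
standardizing the rest is a bijection onto permutations `τ` of one size less, and the result avoids
132 iff `τ` does and `τ 0 ≤ k`. Hence the number `T n k` of 132-avoiders of length `n + 1` starting
with `k` satisfies `T (n + 1) k = ∑ j ≤ k, T n j`, i.e. the Pascal-like rule
`T (n + 1) (k + 1) = T (n + 1) k + T n (k + 1)` of the Catalan triangle, whose closed form follows
by induction.
-/

open Finset Equiv

instance (n : ℕ) : DecidablePred (Avoids132 n) := fun _ => by unfold Avoids132; infer_instance

theorem exists_lt_apply_lt_iff_of_avoids132 {n : ℕ} [NeZero n] {σ : Perm (Fin n)}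
    (hσ : Avoids132 n σ) (i : Fin n) : (∃ j < i, σ i < σ j) ↔ σ i < σ 0 := by
  constructor
  · rintro ⟨j, hji, hij⟩
    by_contra! h0
    have hi : i ≠ 0 := ((Fin.zero_le j).trans_lt hji).ne'
    have hj : j ≠ 0 := by rintro rfl; exact h0.not_gt hij
    exact hσ 0 j i (Fin.pos_iff_ne_zero.2 hj) hji ⟨h0.lt_of_ne (σ.injective.ne hi.symm), hij⟩
  · intro h
    exact ⟨0, Fin.pos_iff_ne_zero.2 fun hi => (hi ▸ h).false, h⟩

theorem mmp_zero_one_zero_zero_eq_apply_zero {n : ℕ} [NeZero n] {σ : Perm (Fin n)}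
    (hσ : Avoids132 n σ) : mmp n 0 1 0 0 σ = σ 0 :=
  calc mmp n 0 1 0 0 σ = Nat.card {i : Fin n | σ i < σ 0} := by
        simp only [mmp, zero_le, true_and, and_true, Nat.one_le_iff_ne_zero,
          ← Nat.pos_iff_ne_zero, Finite.card_pos_iff, Set.nonempty_coe_sort, Set.Nonempty,
          Set.mem_ofPred_eq, exists_lt_apply_lt_iff_of_avoids132 hσ]
    _ = Nat.card (Set.Iio (σ 0)) := Nat.card_congr (σ.subtypeEquiv fun _ => Iff.rfl)
    _ = σ 0 := by simp

noncomputable def consPerm {n : ℕ} (p : Fin (n + 1)) (τ : Perm (Fin n)) : Perm (Fin (n + 1)) :=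
  .ofBijective (Fin.cons p (p.succAbove ∘ τ) : Fin (n + 1) → Fin (n + 1)) <|
    Finite.injective_iff_bijective.mp <| Fin.cons_injective_iff.mpr
      ⟨fun ⟨j, hj⟩ => Fin.succAbove_ne p (τ j) hj, Fin.succAbove_right_injective.comp τ.injective⟩

section consPerm

variable {n : ℕ} (p : Fin (n + 1)) (τ : Perm (Fin n))

@[simp] theorem consPerm_zero : consPerm p τ 0 = p := rfl

@[simp] theorem consPerm_succ (j : Fin n) : consPerm p τ j.succ = p.succAbove (τ j) := rfl

theorem consPerm_injective : Function.Injective (consPerm p) := fun τ₁ τ₂ h =>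
  Equiv.ext fun j => by simpa using DFunLike.congr_fun h j.succ

theorem exists_consPerm_eq (σ : Perm (Fin (n + 1))) : ∃ τ, consPerm (σ 0) τ = σ := by
  have hne (j : Fin n) : σ j.succ ≠ σ 0 := σ.injective.ne (Fin.succ_ne_zero j)
  choose g hg using fun j => Fin.exists_succAbove_eq (hne j)
  have hg_inj : Function.Injective g := fun j₁ j₂ h =>
    Fin.succ_injective n (σ.injective (by rw [← hg j₁, ← hg j₂, h]))
  refine ⟨.ofBijective g (Finite.injective_iff_bijective.mp hg_inj), Equiv.ext fun i => ?_⟩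
  cases i using Fin.cases with
  | zero => rfl
  | succ j => exact hg j

end consPerm

theorem avoids132_consPerm_iff {n : ℕ} (p : Fin (n + 2)) (τ : Perm (Fin (n + 1))) :
    Avoids132 (n + 2) (consPerm p τ) ↔ Avoids132 (n + 1) τ ∧ (τ 0).castSucc ≤ p := by
  constructor
  · intro h
    refine ⟨fun i j l hij hjl ⟨hil, hlj⟩ => h i.succ j.succ l.succ (by simpa) (by simpa)
      ⟨by simpa, by simpa⟩, ?_⟩
    by_contra! hlt
    -- the entries `p`, `τ 0 + 1`, `p + 1` form a 132
    set q := p.castPred (Fin.ne_last_of_lt hlt)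
    have hq : q.castSucc = p := Fin.castSucc_castPred p _
    have hb : τ.symm q ≠ 0 := fun h0 => by
      rw [← hq, ← h0, apply_symm_apply] at hlt
      exact hlt.false
    refine h 0 (0 : Fin (n + 1)).succ (τ.symm q).succ (Fin.succ_pos _)
      (Fin.succ_lt_succ_iff.mpr (Fin.pos_iff_ne_zero.mpr hb)) ⟨?_, ?_⟩
    · simp [Fin.lt_succAbove_iff_le_castSucc, hq]
    · simp only [consPerm_succ, apply_symm_apply, Fin.succAbove_lt_succAbove_iff]
      rwa [← Fin.castSucc_lt_castSucc_iff, hq]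
  · rintro ⟨hτ, h0⟩ i j l hij hjl ⟨hil, hlj⟩
    obtain ⟨a, rfl⟩ := Fin.exists_succ_eq.mpr (Fin.ne_zero_of_lt hij)
    obtain ⟨b, rfl⟩ := Fin.exists_succ_eq.mpr (Fin.ne_zero_of_lt hjl)
    rw [Fin.succ_lt_succ_iff] at hjl
    cases i using Fin.cases with
    | zero =>
      simp only [consPerm_zero, consPerm_succ, Fin.lt_succAbove_iff_le_castSucc,
        Fin.succAbove_lt_succAbove_iff] at hil hlj
      have h0b : (τ 0).castSucc ≤ (τ b).castSucc := h0.trans hil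
      have ha : a ≠ 0 := by
        rintro rfl
        exact (Fin.castSucc_lt_castSucc_iff.mpr hlj).not_ge h0b
      refine hτ 0 a b (Fin.pos_iff_ne_zero.mpr ha) hjl ⟨?_, hlj⟩
      exact (Fin.castSucc_le_castSucc_iff.mp h0b).lt_of_ne
        (τ.injective.ne (Fin.ne_zero_of_lt hjl).symm)
    | succ c =>
      simp only [consPerm_succ, Fin.succAbove_lt_succAbove_iff] at hil hlj
      exact hτ c a b (Fin.succ_lt_succ_iff.mp hij) hjl ⟨hil, hlj⟩

def headCount (n k : ℕ) : ℕ :=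
  #{σ : Perm (Fin (n + 1)) | Avoids132 (n + 1) σ ∧ (σ 0 : ℕ) = k}

theorem headCount_zero (k : ℕ) : headCount 0 k = if k = 0 then 1 else 0 := by
  have hσ (σ : Perm (Fin 1)) : Avoids132 1 σ ∧ (σ 0 : ℕ) = k ↔ k = 0 := by
    simp [Avoids132, eq_comm, Subsingleton.elim (σ 0) 0]
  rw [headCount, filter_congr fun σ _ => hσ σ]
  split_ifs with hk <;> simp [hk]

theorem headCount_eq_zero_of_lt {n k : ℕ} (h : n < k) : headCount n k = 0 := by
  simp only [headCount, card_eq_zero, filter_eq_empty_iff]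
  exact fun σ _ ⟨_, hk⟩ => by have := (σ 0).isLt; omega

theorem headCount_succ {n k : ℕ} (hk : k ≤ n + 1) :
    headCount (n + 1) k = ∑ j ∈ range (k + 1), headCount n j := by
  let p : Fin (n + 2) := ⟨k, by omega⟩
  calc headCount (n + 1) k
      = #{τ : Perm (Fin (n + 1)) | Avoids132 (n + 1) τ ∧ (τ 0 : ℕ) ≤ k} := by
        have hp (τ : Perm (Fin (n + 1))) : (τ 0).castSucc ≤ p ↔ (τ 0 : ℕ) ≤ k := Iff.rfl
        refine (card_bij (fun τ _ => consPerm p τ) (fun τ hτ => ?_)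
          (fun _ _ _ _ h => consPerm_injective p h) (fun σ hσ => ?_)).symm
        · simp only [mem_filter, mem_univ, true_and, ← hp] at hτ ⊢
          exact ⟨(avoids132_consPerm_iff p τ).mpr hτ, rfl⟩
        · simp only [mem_filter, mem_univ, true_and, ← hp] at hσ ⊢
          obtain ⟨τ, hτ⟩ := exists_consPerm_eq σ
          rw [show σ 0 = p from Fin.ext hσ.2] at hτ
          subst hτ
          exact ⟨τ, (avoids132_consPerm_iff p τ).mp hσ.1, rfl⟩
    _ = ∑ j ∈ range (k + 1), headCount n j := by
        rw [card_eq_sum_card_fiberwise (f := fun τ => (τ 0 : ℕ)) (t := range (k + 1))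
          fun τ hτ => mem_range_succ_iff.mpr (mem_filter.mp hτ).2.2]
        refine sum_congr rfl fun j hj => ?_
        rw [headCount, filter_filter]
        refine congrArg card (filter_congr fun τ _ => ?_)
        have := mem_range_succ_iff.mp hj
        constructor
        · exact fun ⟨⟨hτ, _⟩, hj⟩ => ⟨hτ, hj⟩
        · exact fun ⟨hτ, hj⟩ => ⟨⟨hτ, by omega⟩, hj⟩

theorem headCount_succ_succ {n k : ℕ} (hk : k ≤ n) :
    headCount (n + 1) (k + 1) = headCount (n + 1) k + headCount n (k + 1) := by
  rw [headCount_succ (by omega), headCount_succ (by omega), sum_range_succ]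

theorem succ_mul_headCount (n k : ℕ) :
    (n + 1) * headCount n k = (n + 1 - k) * (n + k).choose k := by
  induction n generalizing k with
  | zero => rcases k with _ | k <;> simp [headCount_zero]
  | succ n ih =>
    induction k with
    | zero =>
      have h0 : headCount n 0 = 1 := by simpa using ih 0
      simp [headCount_succ (Nat.zero_le _), h0]
    | succ k ihk =>
      obtain hnk | hkn := Nat.lt_or_ge n k
      · rw [headCount_eq_zero_of_lt (by omega), Nat.sub_eq_zero_of_le (by omega)]; simp
      have hpas := headCount_succ_succ hkn
      have ih' := ih (k + 1)
      have hratio := Nat.choose_succ_right_eq (n + k + 1) k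
      rw [show n + (k + 1) = n + k + 1 by ring, Nat.add_sub_add_right] at ih'
      rw [show n + 1 + k = n + k + 1 by ring] at ihk
      rw [show n + k + 1 - k = n + 1 by omega] at hratio
      rw [show n + 1 + (k + 1) = n + k + 1 + 1 by ring, Nat.choose_succ_succ',
        Nat.add_sub_add_right]
      refine Nat.eq_of_mul_eq_mul_left (Nat.succ_pos n) ?_
      zify [hkn, (by omega : k ≤ n + 1), (by omega : k ≤ n + 1 + 1)] at hpas ih' ihk hratio ⊢
      linear_combination
        (n + 1 : ℤ) * (n + 2) * hpas + (n + 1 : ℤ) * ihk + (n + 2 : ℤ) * ih' - hratio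

/-- `C(n,k)` is stated multiplied through by `n` to avoid rational arithmetic. -/
theorem card_mmp0100_eq_catalanTriangle_general (n k : ℕ) :
    n * Nat.card {σ : Equiv.Perm (Fin n) | Avoids132 n σ ∧ mmp n 0 1 0 0 σ = k} =
    (n - k) * (n + k - 1).choose k := by
  cases n with
  | zero => simp
  | succ n =>
    have hset : {σ : Perm (Fin (n + 1)) | Avoids132 (n + 1) σ ∧ mmp (n + 1) 0 1 0 0 σ = k} =
        {σ | Avoids132 (n + 1) σ ∧ (σ 0 : ℕ) = k} := by
      ext σ
      exact and_congr_right fun hσ => by rw [mmp_zero_one_zero_zero_eq_apply_zero hσ]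
    rw [hset, Nat.card_eq_card_toFinset, Set.toFinset_ofPred, ← headCount,
      succ_mul_headCount, Nat.add_right_comm, Nat.add_sub_cancel]

/-- The number of 132-avoiding permutations of `{1,…,n}` containing exactly `k` values
having at least one greater value on their left (i.e. with `mmp(0,1,0,0)(σ) = k`) equals
the Catalan triangle number `C(n,k) = ((n-k)/n) * choose (n+k-1) k`
(stated multiplied through by `n` to avoid rational arithmetic). -/
theorem card_mmp0100_eq_catalanTriangle (n k : ℕ) (hn : 1 ≤ n) (hk : k ≤ n - 1) :
    n * Nat.card {σ : Equiv.Perm (Fin n) | Avoids132 n σ ∧ mmp n 0 1 0 0 σ = k} =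
    (n - k) * (n + k - 1).choose k :=
  card_mmp0100_eq_catalanTriangle_general n k
end

section
/- For all integers 1 ≤ k ≤ n, the number of 132-avoiding permutations σ of {1,…,n} with mmp(0,k,0,0)(σ) = 0 equals the sum of the first k entries of the n-th row of the Catalan triangle, that is, Σ_{j=0}^{k−1} C(n,j) where C(n,j) = ((n−j)/n)·binomial(n+j−1, j). -/
/-!
Let `bounded132Count n k` count the 132-avoiding permutations of `Fin n` in which every entry has
fewer than `k` larger entries to its left; `mmp(0,k,0,0) = 0` says exactly this. In a 132-avoiding
permutation everything left of the maximum `n` exceeds everything right of it, so with the maximum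
at position `m` the permutation is a bounded 132-avoider on the top `m` values, then `n`, then a
132-avoider on the bottom values whose entries each gain `m + 1` larger entries on their left. This
gives `c (n + 1) k = ∑ₘ c m k * c (n - m) (k - m - 1)` for `c = bounded132Count` and `k ≥ 1`.
The Catalan triangle satisfies the same recurrence by the first-return decomposition of ballot
paths, and summing a row of the triangle telescopes by Pascal's rule.
-/

open Finset Equiv

/-- The Catalan triangle entry `C(a + 1, j) = ((a + 1 - j)/(a + 1)) * choose (a + j) j`; writing
`choose (a + j) (j - 1)` as `choose (a + j) (a + 1)` avoids truncated subtraction at `j = 0`. -/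
def ballot (a j : ℕ) : ℤ := (a + j).choose a - (a + j).choose (a + 1)

@[simp] lemma ballot_zero_right (a : ℕ) : ballot a 0 = 1 := by simp [ballot]

lemma ballot_succ_succ (a j : ℕ) :
    ballot (a + 1) (j + 1) = ballot a (j + 1) + ballot (a + 1) j := by
  simp only [ballot, show a + 1 + (j + 1) = (a + (j + 1)) + 1 by omega,
    show a + 1 + j = a + (j + 1) by omega, Nat.choose_succ_succ', Nat.cast_add]
  ring

@[simp] lemma ballot_self_succ (a : ℕ) : ballot a (a + 1) = 0 := by
  simp [ballot, show a + (a + 1) = 2 * a + 1 by omega, Nat.choose_symm_half]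

lemma mul_ballot (a j : ℕ) :
    ((a : ℤ) + 1) * ballot a j = ((a : ℤ) + 1 - j) * (a + j).choose j := by
  have h : ((a + j).choose (a + 1) : ℤ) * (a + 1) = (a + j).choose a * j := by
    have := Nat.choose_succ_right_eq (a + j) a
    rw [Nat.add_sub_cancel_left] at this
    exact_mod_cast this
  rw [ballot, ← Nat.choose_symm_add]
  linear_combination -h

lemma sum_range_ballot (a i : ℕ) : ∑ j ∈ range (i + 1), ballot a j = ballot (a + 1) i := by
  induction i with
  | zero => simp
  | succ i ih => rw [sum_range_succ, ih, ballot_succ_succ, add_comm]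

lemma ballot_self_eq_sum (n : ℕ) :
    ballot (n + 1) (n + 1) = ∑ m ∈ range (n + 2), ballot m m * ballot (n - m) (n + 1 - m) := by
  rw [sum_range_succ, sum_eq_zero fun m hm => ?_]
  · simp
  · rw [show n + 1 - m = n - m + 1 by grind, ballot_self_succ, mul_zero]

/-- The first-return decomposition of ballot paths. -/
lemma ballot_succ_eq_sum {n i : ℕ} (h : i ≤ n + 1) :
    ballot (n + 1) i = ∑ m ∈ range (i + 1), ballot m m * ballot (n - m) (i - m) := by
  induction n generalizing i with
  | zero =>
    obtain rfl | rfl : i = 0 ∨ i = 1 := by omega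
    · simp
    · exact ballot_self_eq_sum 0
  | succ n ih =>
    induction i with
    | zero => simp
    | succ i ihi =>
      obtain hi | rfl : i + 1 ≤ n + 1 ∨ i = n + 1 := by omega
      · rw [ballot_succ_succ, ih hi, ihi (by omega), sum_range_succ _ (i + 1),
          sum_range_succ _ (i + 1), add_right_comm, ← sum_add_distrib]
        congr 1
        · refine sum_congr rfl fun m hm => ?_
          rw [mem_range] at hm
          rw [show n + 1 - m = n - m + 1 by omega, show i + 1 - m = i - m + 1 by omega,
            ballot_succ_succ, show n - m + 1 = n + 1 - m by omega]
          ring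
        · simp
      · exact ballot_self_eq_sum (n + 1)

instance inst_s7 (n : ℕ) : DecidablePred (Avoids132 n) := fun σ => by unfold Avoids132; infer_instance

def leftLarger {N : ℕ} (σ : Perm (Fin N)) (i : Fin N) : ℕ := #{j | j < i ∧ σ i < σ j}

lemma mmp_zero_k_zero_zero_eq_zero_iff {n k : ℕ} (σ : Perm (Fin n)) :
    mmp n 0 k 0 0 σ = 0 ↔ ∀ i, leftLarger σ i < k := by
  simp [mmp, leftLarger, Nat.card_eq_fintype_card, Fintype.card_subtype]

lemma leftLarger_le {N : ℕ} (σ : Perm (Fin N)) (i : Fin N) : leftLarger σ i ≤ i :=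
  (card_le_card fun _ hj => mem_Iio.2 (mem_filter.1 hj).2.1).trans (Fin.card_Iio i).le

lemma leftLarger_eq_zero_of_eq_last {n : ℕ} {σ : Perm (Fin (n + 1))} {i : Fin (n + 1)}
    (h : σ i = Fin.last n) : leftLarger σ i = 0 := by
  simp [leftLarger, h, Fin.le_last]

def bounded132Count (N k : ℕ) : ℕ :=
  #{σ : Perm (Fin N) | Avoids132 N σ ∧ ∀ i, leftLarger σ i < k}

lemma bounded132Count_of_le {N k : ℕ} (h : N ≤ k) :
    bounded132Count N k = #{σ : Perm (Fin N) | Avoids132 N σ} := by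
  unfold bounded132Count
  congr 1
  exact filter_congr fun σ _ =>
    and_iff_left fun i => (leftLarger_le σ i).trans_lt (i.2.trans_le h)

lemma card_mmp_zero_k_zero_zero_eq_zero (n k : ℕ) :
    Nat.card {σ : Perm (Fin n) | Avoids132 n σ ∧ mmp n 0 k 0 0 σ = 0} = bounded132Count n k := by
  simp [mmp_zero_k_zero_zero_eq_zero_iff, bounded132Count, Nat.card_eq_fintype_card,
    Fintype.card_subtype]

@[simp] lemma bounded132Count_zero_left (k : ℕ) : bounded132Count 0 k = 1 := by
  simp [bounded132Count, Avoids132]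

@[simp] lemma bounded132Count_succ_zero (n : ℕ) : bounded132Count (n + 1) 0 = 0 := by
  simp [bounded132Count]

section Embedding

variable {M N : ℕ} {σ : Perm (Fin N)} {τ : Perm (Fin M)} (e : Fin M ↪o Fin N)

lemma Avoids132.of_orderEmbedding (he : ∀ a b, τ a < τ b ↔ σ (e a) < σ (e b))
    (h : Avoids132 N σ) : Avoids132 M τ :=
  fun i j k hij hjk hτ =>
    h (e i) (e j) (e k) (e.lt_iff_lt.2 hij) (e.lt_iff_lt.2 hjk)
      ⟨(he _ _).1 hτ.1, (he _ _).1 hτ.2⟩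

lemma not_pattern132_of_mem_range (he : ∀ a b, τ a < τ b ↔ σ (e a) < σ (e b))
    (h : Avoids132 M τ) {i j k : Fin N} (hi : i ∈ Set.range e) (hj : j ∈ Set.range e)
    (hk : k ∈ Set.range e) (hij : i < j) (hjk : j < k) :
    ¬(σ i < σ k ∧ σ k < σ j) := by
  obtain ⟨a, rfl⟩ := hi
  obtain ⟨b, rfl⟩ := hj
  obtain ⟨c, rfl⟩ := hk
  exact fun hσ =>
    h a b c (e.lt_iff_lt.1 hij) (e.lt_iff_lt.1 hjk) ⟨(he _ _).2 hσ.1, (he _ _).2 hσ.2⟩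

end Embedding

lemma card_filter_comp_of_forall_mem_range {α β : Type*} [Fintype α] [Fintype β] (e : α ↪ β)
    {P : β → Prop} [DecidablePred P] (hP : ∀ b, P b → b ∈ Set.range e) :
    #{a | P (e a)} = #{b | P b} := by
  refine card_bij (fun a _ => e a) (by simp) (fun _ _ _ _ h => e.injective h) fun b hb => ?_
  obtain ⟨a, rfl⟩ := hP b (mem_filter.1 hb).2
  exact ⟨a, by simpa using hb, rfl⟩

section InsertMax

variable {n : ℕ} (p : Fin (n + 1))

def leftEmb : Fin p ↪o Fin (n + 1) := Fin.castLEOrderEmb p.2.le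

def rightEmb : Fin (n - p) ↪o Fin (n + 1) :=
  OrderEmbedding.ofStrictMono (fun j => ⟨p + 1 + j, by omega⟩) fun a b h => by
    rw [Fin.lt_def] at h ⊢
    simpa using h

@[simp] lemma leftEmb_val (a : Fin p) : (leftEmb p a : ℕ) = a := rfl

@[simp] lemma rightEmb_val (b : Fin (n - p)) : (rightEmb p b : ℕ) = p + 1 + b := rfl

lemma mem_range_leftEmb {i : Fin (n + 1)} : i ∈ Set.range (leftEmb p) ↔ i < p :=
  ⟨by rintro ⟨a, rfl⟩; exact a.2, fun h => ⟨⟨i, h⟩, rfl⟩⟩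

lemma mem_range_rightEmb {i : Fin (n + 1)} : i ∈ Set.range (rightEmb p) ↔ p < i := by
  refine ⟨?_, fun h => ⟨⟨i - (p + 1), by omega⟩, Fin.ext ?_⟩⟩
  · rintro ⟨b, rfl⟩
    rw [Fin.lt_def, rightEmb_val]
    omega
  · rw [Fin.lt_def] at h
    simp
    omega

@[simp] lemma leftEmb_lt (a : Fin p) : leftEmb p a < p := (mem_range_leftEmb p).1 ⟨a, rfl⟩

@[simp] lemma lt_rightEmb (b : Fin (n - p)) : p < rightEmb p b :=
  (mem_range_rightEmb p).1 ⟨b, rfl⟩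

lemma exists_leftEmb_or_eq_or_exists_rightEmb (i : Fin (n + 1)) :
    (∃ a, leftEmb p a = i) ∨ p = i ∨ ∃ b, rightEmb p b = i := by
  rcases lt_trichotomy i p with h | h | h
  · exact .inl ((mem_range_leftEmb p).2 h)
  · exact .inr (.inl h.symm)
  · exact .inr (.inr ((mem_range_rightEmb p).2 h))

variable (A : Perm (Fin p)) (B : Perm (Fin (n - p)))

def insertMaxFun (i : Fin (n + 1)) : Fin (n + 1) :=
  if h : (i : ℕ) < p then ⟨n - p + A ⟨i, h⟩, by have := (A ⟨i, h⟩).2; omega⟩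
  else if h' : (i : ℕ) = p then Fin.last n
  else ⟨B ⟨i - (p + 1), by omega⟩, by have := (B ⟨i - (p + 1), by omega⟩).2; omega⟩

@[simp] lemma insertMaxFun_leftEmb (a : Fin p) :
    (insertMaxFun p A B (leftEmb p a) : ℕ) = n - p + A a := by
  simp [insertMaxFun]

@[simp] lemma insertMaxFun_self : insertMaxFun p A B p = Fin.last n := by
  simp [insertMaxFun]

@[simp] lemma insertMaxFun_rightEmb (b : Fin (n - p)) :
    (insertMaxFun p A B (rightEmb p b) : ℕ) = B b := by
  have h : ¬ (p : ℕ) + 1 + b < p := by omega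
  have h' : (p : ℕ) + 1 + b ≠ p := by omega
  simp [insertMaxFun, h, h']

lemma insertMaxFun_injective : Function.Injective (insertMaxFun p A B) := by
  intro i j h
  replace h := congrArg Fin.val h
  rcases exists_leftEmb_or_eq_or_exists_rightEmb p i with ⟨a, rfl⟩ | rfl | ⟨b, rfl⟩ <;>
    rcases exists_leftEmb_or_eq_or_exists_rightEmb p j with ⟨c, rfl⟩ | rfl | ⟨d, rfl⟩ <;>
    simp only [insertMaxFun_leftEmb, insertMaxFun_self, insertMaxFun_rightEmb, Fin.val_last] at h
  · exact congrArg _ (A.injective (Fin.ext (by omega)))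
  · have := (A a).2; omega
  · have := (B d).2; omega
  · have := (A c).2; omega
  · rfl
  · have := (B d).2; omega
  · have := (B b).2; omega
  · have := (B b).2; omega
  · exact congrArg _ (B.injective (Fin.ext h))

noncomputable def insertMax : Perm (Fin (n + 1)) :=
  .ofBijective _ (Finite.injective_iff_bijective.1 (insertMaxFun_injective p A B))

lemma insertMax_apply (i : Fin (n + 1)) : insertMax p A B i = insertMaxFun p A B i := rfl

lemma insertMax_leftEmb_lt_iff (a c : Fin p) :
    insertMax p A B (leftEmb p a) < insertMax p A B (leftEmb p c) ↔ A a < A c := by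
  simp only [Fin.lt_def, insertMax_apply, insertMaxFun_leftEmb]
  omega

lemma insertMax_rightEmb_lt_iff (b d : Fin (n - p)) :
    insertMax p A B (rightEmb p b) < insertMax p A B (rightEmb p d) ↔ B b < B d := by
  simp only [Fin.lt_def, insertMax_apply, insertMaxFun_rightEmb]

lemma insertMax_lt_sub_iff (i : Fin (n + 1)) : (insertMax p A B i : ℕ) < n - p ↔ p < i := by
  rcases exists_leftEmb_or_eq_or_exists_rightEmb p i with ⟨a, rfl⟩ | rfl | ⟨b, rfl⟩
  · simpa [insertMax_apply] using (leftEmb_lt p a).le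
  · simp [insertMax_apply]
  · simp [insertMax_apply]

lemma avoids132_insertMax_iff :
    Avoids132 (n + 1) (insertMax p A B) ↔ Avoids132 p A ∧ Avoids132 (n - p) B := by
  refine ⟨fun h => ⟨h.of_orderEmbedding _ fun a c => (insertMax_leftEmb_lt_iff p A B a c).symm,
    h.of_orderEmbedding _ fun b d => (insertMax_rightEmb_lt_iff p A B b d).symm⟩, ?_⟩
  rintro ⟨hA, hB⟩ i j k hij hjk hπ
  rcases lt_trichotomy k p with hk | hk | hk
  · have hj := hjk.trans hk
    exact not_pattern132_of_mem_range _ (fun a c => (insertMax_leftEmb_lt_iff p A B a c).symm)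
      hA ((mem_range_leftEmb p).2 (hij.trans hj)) ((mem_range_leftEmb p).2 hj)
      ((mem_range_leftEmb p).2 hk) hij hjk hπ
  · exact not_lt_of_ge (Fin.le_last _) (by simpa [hk, insertMax_apply] using hπ.2)
  · have hi : p < i := (insertMax_lt_sub_iff p A B i).1
      ((Fin.lt_def.1 hπ.1).trans ((insertMax_lt_sub_iff p A B k).2 hk))
    exact not_pattern132_of_mem_range _ (fun b d => (insertMax_rightEmb_lt_iff p A B b d).symm)
      hB ((mem_range_rightEmb p).2 hi) ((mem_range_rightEmb p).2 (hi.trans hij))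
      ((mem_range_rightEmb p).2 hk) hij hjk hπ

lemma leftLarger_insertMax_leftEmb (a : Fin p) :
    leftLarger (insertMax p A B) (leftEmb p a) = leftLarger A a := by
  unfold leftLarger
  rw [← card_filter_comp_of_forall_mem_range (leftEmb p).toEmbedding fun j hj =>
    (mem_range_leftEmb p).2 (hj.1.trans (leftEmb_lt p a))]
  congr 1
  ext c
  simp [insertMax_leftEmb_lt_iff]

lemma leftLarger_insertMax_rightEmb (b : Fin (n - p)) :
    leftLarger (insertMax p A B) (rightEmb p b) = p + 1 + leftLarger B b := by
  have hle (j : Fin (n + 1)) (hj : j ≤ p) :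
      j < rightEmb p b ∧ insertMax p A B (rightEmb p b) < insertMax p A B j := by
    refine ⟨hj.trans_lt (lt_rightEmb p b), Fin.lt_def.2 ?_⟩
    have := (insertMax_lt_sub_iff p A B j).not.2 hj.not_gt
    have := (insertMax_lt_sub_iff p A B (rightEmb p b)).2 (lt_rightEmb p b)
    omega
  unfold leftLarger
  rw [← card_filter_add_card_filter_not (· ≤ p), filter_filter, filter_filter,
    filter_congr fun j _ => and_iff_right_of_imp (hle j), filter_ge_eq_Iic, Fin.card_Iic,
    ← card_filter_comp_of_forall_mem_range (rightEmb p).toEmbedding fun j hj =>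
      (mem_range_rightEmb p).2 (not_le.1 hj.2)]
  congr 2
  ext d
  simp [insertMax_rightEmb_lt_iff]

lemma forall_leftLarger_insertMax_lt_iff {k : ℕ} (hk : 1 ≤ k) :
    (∀ i, leftLarger (insertMax p A B) i < k) ↔
      (∀ a, leftLarger A a < k) ∧ ∀ b, leftLarger B b < k - (p + 1) := by
  refine ⟨fun h => ⟨fun a => ?_, fun b => ?_⟩, fun ⟨hA, hB⟩ i => ?_⟩
  · simpa [leftLarger_insertMax_leftEmb] using h (leftEmb p a)
  · have := h (rightEmb p b)
    rw [leftLarger_insertMax_rightEmb] at this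
    omega
  · rcases exists_leftEmb_or_eq_or_exists_rightEmb p i with ⟨a, rfl⟩ | rfl | ⟨b, rfl⟩
    · simpa [leftLarger_insertMax_leftEmb] using hA a
    · rw [leftLarger_eq_zero_of_eq_last (by simp [insertMax_apply])]
      exact hk
    · have := hB b
      rw [leftLarger_insertMax_rightEmb]
      omega

end InsertMax

lemma insertMax_injective2 {n : ℕ} (p : Fin (n + 1)) : Function.Injective2 (insertMax p) := by
  intro A A' B B' h
  refine ⟨Equiv.ext fun a => Fin.ext ?_, Equiv.ext fun b => Fin.ext ?_⟩
  · have := congrArg Fin.val (DFunLike.congr_fun h (leftEmb p a))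
    simp only [insertMax_apply, insertMaxFun_leftEmb] at this
    omega
  · simpa [insertMax_apply] using congrArg Fin.val (DFunLike.congr_fun h (rightEmb p b))

lemma exists_perm_add_eq {M c : ℕ} (f : Fin M → ℕ) (hf : Function.Injective f)
    (hc : ∀ a, c ≤ f a ∧ f a < c + M) :
    ∃ A : Perm (Fin M), ∀ a, c + (A a : ℕ) = f a := by
  let g (a : Fin M) : Fin M := ⟨f a - c, by have := hc a; omega⟩
  have hg : Function.Injective g := fun a b h => hf <| by
    have := hc a
    have := hc b
    simp only [g, Fin.ext_iff] at h
    omega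
  refine ⟨.ofBijective g (Finite.injective_iff_bijective.1 hg), fun a => ?_⟩
  have := hc a
  simp only [ofBijective_apply, g]
  omega

section MaxPosition

variable {n : ℕ} {σ : Perm (Fin (n + 1))} {p : Fin (n + 1)}

lemma apply_lt_apply_of_le_of_lt (hσ : Avoids132 (n + 1) σ) (hp : σ p = Fin.last n)
    {i j : Fin (n + 1)} (hi : i ≤ p) (hj : p < j) : σ j < σ i := by
  have hjp : σ j < σ p := by
    rw [hp]
    exact lt_of_le_of_ne (Fin.le_last _) fun h => hj.ne' (σ.injective (h.trans hp.symm))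
  rcases hi.lt_or_eq with hi | rfl
  · exact lt_of_le_of_ne (not_lt.1 fun h => hσ i p j hi hj ⟨h, hjp⟩)
      (σ.injective.ne (hi.trans hj).ne')
  · exact hjp

lemma sub_le_apply_of_le (hσ : Avoids132 (n + 1) σ) (hp : σ p = Fin.last n) {i : Fin (n + 1)}
    (hi : i ≤ p) : n - p ≤ σ i := by
  have := card_le_card_of_injOn σ (s := Ioi p) (t := Iio (σ i))
    (fun j hj => mem_Iio.2 (apply_lt_apply_of_le_of_lt hσ hp hi (mem_Ioi.1 hj)))
    σ.injective.injOn
  rw [Fin.card_Ioi, Fin.card_Iio] at this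
  omega

lemma apply_lt_sub_of_lt (hσ : Avoids132 (n + 1) σ) (hp : σ p = Fin.last n) {j : Fin (n + 1)}
    (hj : p < j) : σ j < n - p := by
  have := card_le_card_of_injOn σ (s := Iic p) (t := Ioi (σ j))
    (fun i hi => mem_Ioi.2 (apply_lt_apply_of_le_of_lt hσ hp (mem_Iic.1 hi) hj))
    σ.injective.injOn
  rw [Fin.card_Iic, Fin.card_Ioi] at this
  omega

lemma exists_insertMax_eq (hσ : Avoids132 (n + 1) σ) (hp : σ p = Fin.last n) :
    ∃ A B, insertMax p A B = σ := by
  obtain ⟨A, hA⟩ := exists_perm_add_eq (fun a => (σ (leftEmb p a) : ℕ))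
    (Fin.val_injective.comp (σ.injective.comp (leftEmb p).injective)) fun a =>
      ⟨sub_le_apply_of_le hσ hp (leftEmb_lt p a).le, by
        have := Fin.val_lt_last (i := σ (leftEmb p a)) fun h =>
          (leftEmb_lt p a).ne (σ.injective (h.trans hp.symm))
        omega⟩
  obtain ⟨B, hB⟩ := exists_perm_add_eq (c := 0) (fun b => (σ (rightEmb p b) : ℕ))
    (Fin.val_injective.comp (σ.injective.comp (rightEmb p).injective)) fun b =>
      ⟨Nat.zero_le _, by simpa using apply_lt_sub_of_lt hσ hp (lt_rightEmb p b)⟩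
  refine ⟨A, B, Equiv.ext fun i => Fin.ext ?_⟩
  rcases exists_leftEmb_or_eq_or_exists_rightEmb p i with ⟨a, rfl⟩ | rfl | ⟨b, rfl⟩
  · simpa [insertMax_apply] using hA a
  · simp [insertMax_apply, hp]
  · simpa [insertMax_apply] using hB b

end MaxPosition

lemma card_filter_apply_eq_last {n k : ℕ} (p : Fin (n + 1)) (hk : 1 ≤ k) :
    #{σ : Perm (Fin (n + 1)) | (Avoids132 (n + 1) σ ∧ ∀ i, leftLarger σ i < k) ∧
      σ p = Fin.last n} = bounded132Count p k * bounded132Count (n - p) (k - (p + 1)) := by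
  rw [bounded132Count, bounded132Count, ← card_product]
  symm
  refine card_bij (fun AB _ => insertMax p AB.1 AB.2) ?_ ?_ ?_
  · rintro ⟨A, B⟩ h
    simp only [mem_product, mem_filter, mem_univ, true_and] at h
    simp [avoids132_insertMax_iff, forall_leftLarger_insertMax_lt_iff p A B hk, h,
      insertMax_apply]
  · rintro ⟨A, B⟩ - ⟨A', B'⟩ - h
    obtain ⟨rfl, rfl⟩ := insertMax_injective2 p h
    rfl
  · intro σ hσ
    simp only [mem_filter, mem_univ, true_and] at hσ
    obtain ⟨A, B, rfl⟩ := exists_insertMax_eq hσ.1.1 hσ.2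
    rw [avoids132_insertMax_iff, forall_leftLarger_insertMax_lt_iff p A B hk] at hσ
    exact ⟨(A, B), by simp [hσ], rfl⟩

theorem bounded132Count_succ {n k : ℕ} (hk : 1 ≤ k) :
    bounded132Count (n + 1) k =
      ∑ m ∈ range (n + 1), bounded132Count m k * bounded132Count (n - m) (k - (m + 1)) := by
  rw [← Fin.sum_univ_eq_sum_range fun m =>
      bounded132Count m k * bounded132Count (n - m) (k - (m + 1)),
    bounded132Count, card_eq_sum_card_fiberwise (f := fun σ => σ.symm (Fin.last n)) (t := univ)
      fun _ _ => mem_univ _]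
  refine sum_congr rfl fun p _ => ?_
  rw [filter_filter, ← card_filter_apply_eq_last p hk]
  congr 1
  ext σ
  simp only [mem_filter, mem_univ, true_and, Equiv.symm_apply_eq, eq_comm (a := Fin.last n)]

theorem bounded132Count_eq_ballot :
    ∀ n j, j ≤ n → (bounded132Count n (j + 1) : ℤ) = ballot n j
  | 0, 0, _ => by simp
  | 0, _ + 1, h => absurd h (by omega)
  | n + 1, j, hj => by
    have ih (m : ℕ) (hm : m ≤ n) (i : ℕ) (hi : i ≤ m) :
        (bounded132Count m (i + 1) : ℤ) = ballot m i :=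
      bounded132Count_eq_ballot m i hi
    -- for `m < j` the left factor is a Catalan number; for `m ≥ j` only `m = n` survives
    have hhead :
        ∑ m ∈ range j, (bounded132Count m (j + 1) * bounded132Count (n - m) (j - m) : ℤ) =
          ∑ m ∈ range j, ballot m m * ballot (n - m) (j - 1 - m) := by
      refine sum_congr rfl fun m hm => ?_
      rw [mem_range] at hm
      rw [show j - m = j - 1 - m + 1 by omega, ih (n - m) (by omega) _ (by omega),
        ← ih m (by omega) m le_rfl, bounded132Count_of_le (by omega : m ≤ j + 1),
        bounded132Count_of_le (by omega : m ≤ m + 1)]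
    have htail : ∑ m ∈ Ico j (n + 1),
        (bounded132Count m (j + 1) * bounded132Count (n - m) (j - m) : ℤ) = ballot n j := by
      rcases (by omega : j ≤ n ∨ j = n + 1) with hjn | rfl
      · rw [sum_eq_single_of_mem n (by simp; omega) fun m hm hmn => ?_]
        · simp [ih n le_rfl j hjn]
        · rw [mem_Ico] at hm
          obtain ⟨r, hr⟩ : ∃ r, n - m = r + 1 := ⟨n - m - 1, by omega⟩
          simp [hr, show j - m = 0 by omega]
      · simp
    rw [bounded132Count_succ (by omega), Nat.cast_sum, ← sum_range_add_sum_Ico _ hj]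
    simp only [Nat.cast_mul, Nat.add_sub_add_right]
    rw [hhead, htail]
    rcases j with _ | i
    · simp
    · rw [ballot_succ_succ, ballot_succ_eq_sum (by omega)]
      simp only [Nat.add_sub_cancel]
      ring

/-- For `1 ≤ k ≤ n`, the number of 132-avoiding permutations of `{1,…,n}` with
`mmp(0,k,0,0)(σ) = 0` equals the sum of the first `k` entries of the `n`-th row of the
Catalan triangle, `∑_{j=0}^{k-1} C(n,j)` with `C(n,j) = ((n-j)/n) * choose (n+j-1) j`
(stated multiplied through by `n` to avoid rational arithmetic). -/
theorem card_mmp0k00_zero_eq_sum_catalanTriangle (n k : ℕ) (hk : 1 ≤ k) (hkn : k ≤ n) :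
    n * Nat.card {σ : Equiv.Perm (Fin n) | Avoids132 n σ ∧ mmp n 0 k 0 0 σ = 0} =
    ∑ j ∈ Finset.range k, (n - j) * (n + j - 1).choose j := by
  obtain ⟨a, rfl⟩ : ∃ a, n = a + 1 := ⟨n - 1, by omega⟩
  obtain ⟨i, rfl⟩ : ∃ i, k = i + 1 := ⟨k - 1, by omega⟩
  rw [card_mmp_zero_k_zero_zero_eq_zero]
  apply Nat.cast_injective (R := ℤ)
  rw [Nat.cast_mul, bounded132Count_eq_ballot (a + 1) i (by omega), ← sum_range_ballot, mul_sum,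
    Nat.cast_sum]
  refine sum_congr rfl fun j hj => ?_
  have hj : j ≤ a + 1 := by rw [mem_range] at hj; omega
  rw [Nat.cast_mul, Nat.cast_sub hj, show a + 1 + j - 1 = a + j by omega]
  push_cast
  rw [mul_ballot]
end

section
/- Let n ≥ 1 and k ≥ 1, and let σ be a 132-avoiding permutation of {1,…,n}. Then mmp(0,k,0,0)(σ) = 0 if and only if the position of the value 1 in σ is at most k, i.e. σ_i = 1 for some i ≤ k. -/
namespace Equiv.Perm

variable {n : ℕ} (σ : Equiv.Perm (Fin n))

noncomputable def numLargerBefore (i : Fin n) : ℕ :=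
  Nat.card {j : Fin n | j < i ∧ σ i < σ j}

lemma mmp_zero_zero_zero_eq_zero_iff (k : ℕ) :
    mmp n 0 k 0 0 σ = 0 ↔ ∀ i, σ.numLargerBefore i < k := by
  have hcard : mmp n 0 k 0 0 σ = Nat.card {i | k ≤ σ.numLargerBefore i} := by
    simp only [mmp, numLargerBefore, zero_le, true_and, and_true]
  rw [hcard, Nat.card_coe_set_eq, Set.ncard_eq_zero, Set.eq_empty_iff_forall_notMem]
  simp only [Set.mem_ofPred_eq, not_le]

variable {σ} {p : Fin n} (hp : ∀ j, σ p ≤ σ j)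
include hp

lemma numLargerBefore_of_forall_le : σ.numLargerBefore p = p := by
  have hset : {j : Fin n | j < p ∧ σ p < σ j} = Set.Iio p := by
    ext j
    refine ⟨And.left, fun hj => ⟨hj, (hp j).lt_of_ne ?_⟩⟩
    exact fun h => hj.ne (σ.injective h.symm)
  rw [numLargerBefore, hset, Nat.card_eq_fintype_card, Fintype.card_Iio, Fin.card_Iio]

lemma _root_.Avoids132.numLargerBefore_le_of_forall_le (hσ : Avoids132 n σ) (i : Fin n) :
    σ.numLargerBefore i ≤ p := by
  rw [← numLargerBefore_of_forall_le hp]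
  refine Nat.card_mono (Set.toFinite _) fun j ⟨hji, hij⟩ => ⟨?_, (hp i).trans_lt hij⟩
  by_contra! hpj
  have hpi : σ p < σ i := (hp i).lt_of_ne fun h => (hpj.trans_lt hji).ne (σ.injective h)
  rcases hpj.eq_or_lt with rfl | hpj
  · exact hpi.not_gt hij
  · exact hσ p j i hpj hji ⟨hpi, hij⟩

lemma _root_.Avoids132.forall_numLargerBefore_lt_iff_of_forall_le (hσ : Avoids132 n σ) (k : ℕ) :
    (∀ i, σ.numLargerBefore i < k) ↔ (p : ℕ) < k :=
  ⟨fun h => numLargerBefore_of_forall_le hp ▸ h p,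
    fun hpk i => (hσ.numLargerBefore_le_of_forall_le hp i).trans_lt hpk⟩

end Equiv.Perm

/-- The value `1` is `0 : Fin n` in the 0-based encoding. -/
theorem mmp0k00_zero_iff_one_early_general (n k : ℕ) (hn : 1 ≤ n)
    (σ : Equiv.Perm (Fin n)) (hσ : Avoids132 n σ) :
    mmp n 0 k 0 0 σ = 0 ↔ ∃ i : Fin n, (i : ℕ) < k ∧ (σ i : ℕ) = 0 := by
  set p := σ.symm ⟨0, hn⟩
  have hσp : σ p = ⟨0, hn⟩ := σ.apply_symm_apply _
  have hp : ∀ j, σ p ≤ σ j := fun j => by simp [hσp, Fin.le_def]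
  rw [σ.mmp_zero_zero_zero_eq_zero_iff, hσ.forall_numLargerBefore_lt_iff_of_forall_le hp]
  exact ⟨fun hpk => ⟨p, hpk, congrArg Fin.val hσp⟩,
    fun ⟨i, hik, hi⟩ => by rwa [show p = i from σ.symm_apply_eq.2 (Fin.ext hi.symm)]⟩

/-- For a 132-avoiding permutation `σ` of `{1,…,n}` and `k ≥ 1`, `mmp(0,k,0,0)(σ) = 0`
if and only if the value `1` (which is `0 : Fin n` in the 0-based encoding) occurs in
one of the first `k` positions of `σ`. -/
theorem mmp0k00_zero_iff_one_early (n k : ℕ) (hn : 1 ≤ n) (hk : 1 ≤ k)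
    (σ : Equiv.Perm (Fin n)) (hσ : Avoids132 n σ) :
    mmp n 0 k 0 0 σ = 0 ↔ ∃ i : Fin n, (i : ℕ) < k ∧ (σ i : ℕ) = 0 :=
  mmp0k00_zero_iff_one_early_general n k hn σ hσ
end

section
/- For all integers n ≥ 1 and 0 ≤ k ≤ n−1, the number of 132-avoiding permutations σ of {1,…,n} with mmp(0,0,1,0)(σ) = k equals the Narayana number N(n,k+1) = (1/n)·binomial(n,k)·binomial(n,k+1). -/
/-!
Call an entry of `σ` a left-to-right minimum if no smaller entry precedes it, so that
`mmp(0,0,1,0)(σ)` counts the other entries. Record the set `B` of their positions, and the set `A`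
made of `0` and of their values `v` reflected to `n - v`. For 132-avoiding `σ` the pair `(A, B)`
determines `σ`, and `A` dominates `B`: below every `t ∈ [1, n]` it has more elements than `B`,
because the least of the first `t` entries is a left-to-right minimum of value at most `n - t`.
Conversely every dominating pair with `#A = k + 1` and `#B = k` arises, by induction on `k`:
the value `n - max A` is inserted at the first position of `B` preceded by a smaller
left-to-right minimum. By the cycle lemma exactly one of the `n` common rotations of two sets of
sizes `k + 1` and `k` is dominating, so `n` times the number of dominating pairs is
`C(n, k + 1) C(n, k)`.
-/

namespace Avoid132

open Finset Equiv
open scoped Pointwise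

variable {n : ℕ}

section countBelow

def countBelow (X : Finset (Fin n)) (t : ℕ) : ℕ := #{i ∈ X | i.1 < t}

lemma countBelow_le_card (X : Finset (Fin n)) (t : ℕ) : countBelow X t ≤ #X :=
  card_filter_le _ _

lemma countBelow_eq_card {X : Finset (Fin n)} {t : ℕ} (h : ∀ x ∈ X, (x : ℕ) < t) :
    countBelow X t = #X := by
  rw [countBelow, filter_true_of_mem h]

lemma countBelow_of_le (X : Finset (Fin n)) {t : ℕ} (ht : n ≤ t) : countBelow X t = #X :=
  countBelow_eq_card fun x _ => x.isLt.trans_le ht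

lemma countBelow_lt_card {X : Finset (Fin n)} {b : Fin n} (hb : b ∈ X) {t : ℕ} (ht : t ≤ b) :
    countBelow X t < #X :=
  card_lt_card (filter_ssubset.2 ⟨b, hb, not_lt.2 ht⟩)

lemma countBelow_succ_le (X : Finset (Fin n)) (t : ℕ) :
    countBelow X (t + 1) ≤ countBelow X t + 1 := by
  have hsplit : {i ∈ X | i.1 < t + 1} ⊆ {i ∈ X | i.1 < t} ∪ {i ∈ X | i.1 = t} := by
    intro i hi
    rw [mem_filter] at hi
    exact mem_union.2 ((Nat.lt_succ_iff_lt_or_eq.1 hi.2).imp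
      (fun h => mem_filter.2 ⟨hi.1, h⟩) (fun h => mem_filter.2 ⟨hi.1, h⟩))
  have hone : #{i ∈ X | i.1 = t} ≤ 1 :=
    card_le_one.2 fun a ha b hb => Fin.ext ((mem_filter.1 ha).2.trans (mem_filter.1 hb).2.symm)
  exact (card_le_card hsplit).trans ((card_union_le _ _).trans (by rw [countBelow]; omega))

lemma countBelow_erase {X : Finset (Fin n)} {a : Fin n} (ha : a ∈ X) (t : ℕ) :
    countBelow (X.erase a) t + (if (a : ℕ) < t then 1 else 0) = countBelow X t := by
  rw [countBelow, countBelow, filter_erase]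
  split_ifs with h
  · exact card_erase_add_one (mem_filter.2 ⟨ha, h⟩)
  · have ha' : a ∉ {i ∈ X | i.1 < t} := fun hmem => h (mem_filter.1 hmem).2
    rw [erase_eq_of_notMem ha', add_zero]

end countBelow

section deleteAt

variable {m : ℕ}

lemma val_succAbove (p : Fin (m + 1)) (j : Fin m) :
    (p.succAbove j : ℕ) = if (j : ℕ) < p then (j : ℕ) else j + 1 := by
  rcases lt_or_ge (j : ℕ) p with h | h
  · rw [Fin.succAbove_of_castSucc_lt _ _ h, if_pos h, Fin.val_castSucc]
  · rw [Fin.succAbove_of_le_castSucc _ _ h, if_neg h.not_gt, Fin.val_succ]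

def deleteAt (q : Fin (m + 1)) (C : Finset (Fin (m + 1))) : Finset (Fin m) :=
  {j | q.succAbove j ∈ C}

lemma map_deleteAt (q : Fin (m + 1)) (C : Finset (Fin (m + 1))) :
    (deleteAt q C).map q.succAboveEmb = C.erase q := by
  ext c
  simp only [deleteAt, mem_map, mem_filter, mem_univ, true_and, Fin.coe_succAboveEmb, mem_erase]
  constructor
  · rintro ⟨j, hj, rfl⟩
    exact ⟨Fin.succAbove_ne q j, hj⟩
  · rintro ⟨hcq, hc⟩
    obtain ⟨j, rfl⟩ := Fin.exists_succAbove_eq hcq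
    exact ⟨j, hc, rfl⟩

lemma card_deleteAt {q : Fin (m + 1)} {C : Finset (Fin (m + 1))} (hq : q ∈ C) :
    #(deleteAt q C) + 1 = #C := by
  rw [← card_map q.succAboveEmb, map_deleteAt, card_erase_add_one hq]

lemma countBelow_deleteAt (q : Fin (m + 1)) (C : Finset (Fin (m + 1))) (t : ℕ) :
    countBelow (deleteAt q C) t = countBelow (C.erase q) (if t ≤ q then t else t + 1) := by
  rw [countBelow, countBelow, ← map_deleteAt, filter_map, card_map]
  refine congrArg card (filter_congr fun j _ => ?_)
  simp only [Function.comp_apply, Fin.coe_succAboveEmb, val_succAbove]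
  split_ifs <;> omega

lemma countBelow_deleteAt_of_le {q : Fin (m + 1)} (C : Finset (Fin (m + 1))) {t : ℕ}
    (ht : t ≤ q) : countBelow (deleteAt q C) t = countBelow C t := by
  by_cases hq : q ∈ C
  · rw [countBelow_deleteAt, if_pos ht, ← countBelow_erase hq, if_neg ht.not_gt, add_zero]
  · rw [countBelow_deleteAt, if_pos ht, Finset.erase_eq_of_notMem hq]

lemma countBelow_deleteAt_of_lt {q : Fin (m + 1)} {C : Finset (Fin (m + 1))}
    (hq : q ∈ C) {t : ℕ} (ht : q < t) :
    countBelow (deleteAt q C) t + 1 = countBelow C (t + 1) := by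
  rw [countBelow_deleteAt, if_neg ht.not_ge, ← countBelow_erase hq, if_pos (by omega)]

end deleteAt

lemma card_filter_le_val (c : ℕ) : #{v : Fin n | c ≤ (v : ℕ)} = n - c := by
  have h := card_filter_add_card_filter_not (s := (univ : Finset (Fin n)))
    fun v : Fin n => (v : ℕ) < c
  simp only [not_lt, card_univ, Fintype.card_fin, Fin.card_filter_val_lt] at h
  omega

lemma card_filter_le_apply (σ : Perm (Fin n)) (c : ℕ) :
    #{p : Fin n | c ≤ (σ p : ℕ)} = n - c := by
  rw [← card_filter_le_val c]
  exact card_equiv σ (by simp)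

section LRMin

variable {σ : Perm (Fin n)} {i j : Fin n}

def IsNonLRMin (σ : Perm (Fin n)) (i : Fin n) : Prop := ∃ j < i, σ j < σ i

instance (σ : Perm (Fin n)) : DecidablePred (IsNonLRMin σ) := fun _ => by
  unfold IsNonLRMin; infer_instance

def nonLRMinPos (σ : Perm (Fin n)) : Finset (Fin n) := {i | IsNonLRMin σ i}

def nonLRMinVal (σ : Perm (Fin n)) : Finset (Fin n) := (nonLRMinPos σ).map σ.toEmbedding

@[simp] lemma mem_nonLRMinPos : i ∈ nonLRMinPos σ ↔ IsNonLRMin σ i := by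
  simp [nonLRMinPos]

lemma IsNonLRMin.apply_ne_zero [NeZero n] (h : IsNonLRMin σ i) : σ i ≠ 0 := by
  obtain ⟨j, -, hj⟩ := h
  exact (lt_of_le_of_lt (Fin.zero_le _) hj).ne'

lemma apply_mem_nonLRMinVal : σ i ∈ nonLRMinVal σ ↔ IsNonLRMin σ i := by
  simp [nonLRMinVal]

lemma card_nonLRMinVal (σ : Perm (Fin n)) : #(nonLRMinVal σ) = #(nonLRMinPos σ) :=
  card_map _

lemma mmp_zero_zero_one_zero (σ : Perm (Fin n)) : mmp n 0 0 1 0 σ = #(nonLRMinPos σ) := by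
  have hset : {i : Fin n | 0 ≤ Nat.card {j : Fin n | i < j ∧ σ i < σ j} ∧
      0 ≤ Nat.card {j : Fin n | j < i ∧ σ i < σ j} ∧
      1 ≤ Nat.card {j : Fin n | j < i ∧ σ j < σ i} ∧
      0 ≤ Nat.card {j : Fin n | i < j ∧ σ j < σ i}} = {i | IsNonLRMin σ i} := by
    ext i
    simp only [Set.mem_ofPred_eq, zero_le, true_and, and_true, Nat.one_le_iff_ne_zero,
      ← Nat.pos_iff_ne_zero, Nat.card_pos_iff, Set.nonempty_coe_sort, Set.finite_coe_iff,
      Set.toFinite, IsNonLRMin]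
    rfl
  rw [mmp, hset, Nat.card_eq_fintype_card, Fintype.card_subtype]
  rfl

lemma lt_of_not_isNonLRMin (h : ¬IsNonLRMin σ i) (hj : j < i) : σ i < σ j :=
  (lt_or_gt_of_ne (σ.injective.ne hj.ne')).resolve_right fun hlt => h ⟨j, hj, hlt⟩

lemma isNonLRMin_iff_exists_ne {q : Fin n} (hq : IsNonLRMin σ q) :
    IsNonLRMin σ i ↔ ∃ j ≠ q, j < i ∧ σ j < σ i := by
  refine ⟨fun ⟨j, hj, hji⟩ => ?_, fun ⟨j, _, hj⟩ => ⟨j, hj⟩⟩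
  rcases eq_or_ne j q with rfl | hjq
  · obtain ⟨l, hl, hlj⟩ := hq
    exact ⟨l, hl.ne, hl.trans hj, hlj.trans hji⟩
  · exact ⟨j, hjq, hj, hji⟩

lemma exists_not_isNonLRMin_le (σ : Perm (Fin n)) (j : Fin n) :
    ∃ i ≤ j, ¬IsNonLRMin σ i ∧ σ i ≤ σ j := by
  obtain ⟨i, hi, hmin⟩ := exists_min_image (Iic j) σ ⟨j, mem_Iic.2 le_rfl⟩
  refine ⟨i, mem_Iic.1 hi, fun ⟨l, hl, hlt⟩ => ?_, hmin j (mem_Iic.2 le_rfl)⟩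
  exact (hmin l (mem_Iic.2 (hl.le.trans (mem_Iic.1 hi)))).not_gt hlt

/-- Every left-to-right minimum of value at least `w > σ i` lies before `i`, while the least
entry up to `i` is a left-to-right minimum of value below `w`. -/
lemma card_lrMin_val_ge_lt_card_lrMin_le (σ : Perm (Fin n)) {w : ℕ} (hi : (σ i : ℕ) < w) :
    #{p | ¬IsNonLRMin σ p ∧ w ≤ (σ p : ℕ)} < #{p | ¬IsNonLRMin σ p ∧ p ≤ i} := by
  obtain ⟨i₀, hi₀, hmin, hle⟩ := exists_not_isNonLRMin_le σ i
  have hsub : ({p | ¬IsNonLRMin σ p ∧ w ≤ (σ p : ℕ)} : Finset (Fin n)) ⊆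
      ({p | ¬IsNonLRMin σ p ∧ p ≤ i} : Finset (Fin n)) := by
    intro p hp
    simp only [mem_filter, mem_univ, true_and] at hp ⊢
    refine ⟨hp.1, le_of_not_gt fun hip => ?_⟩
    have := lt_of_not_isNonLRMin hp.1 hip
    rw [Fin.lt_def] at this
    omega
  refine card_lt_card ((ssubset_iff_of_subset hsub).2 ⟨i₀, ?_, ?_⟩) <;>
    simp only [mem_filter, mem_univ, true_and, not_and, not_le]
  · exact ⟨hmin, hi₀⟩
  · exact fun _ => lt_of_le_of_lt (Fin.le_def.1 hle) hi

lemma card_lrMin_lt_add_countBelow (σ : Perm (Fin n)) {t : ℕ} (ht : t ≤ n) :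
    #{p | ¬IsNonLRMin σ p ∧ (p : ℕ) < t} + countBelow (nonLRMinPos σ) t = t := by
  have h := card_filter_add_card_filter_not (s := {p : Fin n | (p : ℕ) < t})
    (IsNonLRMin σ)
  rw [Fin.card_filter_val_lt, min_eq_right ht, filter_filter, filter_filter] at h
  rw [add_comm, countBelow, nonLRMinPos, filter_filter]
  convert h using 2 <;> exact congrArg card (filter_congr fun _ _ => and_comm)

lemma card_nonLRMin_val_ge_add_card_lrMin_val_ge (σ : Perm (Fin n)) (c : ℕ) :
    #{p | IsNonLRMin σ p ∧ c ≤ (σ p : ℕ)} + #{p | ¬IsNonLRMin σ p ∧ c ≤ (σ p : ℕ)} = n - c := by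
  rw [← card_filter_le_apply σ c,
    ← card_filter_add_card_filter_not (s := {p | c ≤ (σ p : ℕ)}) (IsNonLRMin σ),
    filter_filter, filter_filter]
  congr 1 <;> exact congrArg card (filter_congr fun _ _ => and_comm)

end LRMin

def Dominates (A B : Finset (Fin n)) : Prop :=
  ∀ t, 0 < t → t ≤ n → countBelow B t < countBelow A t

def ballotPairs (n k : ℕ) : Set (Finset (Fin n) × Finset (Fin n)) :=
  {p | #p.1 = k + 1 ∧ #p.2 = k ∧ Dominates p.1 p.2}

section Encoding

variable [NeZero n]

/-- Values are reflected by `v ↦ -v`, i.e. `v ↦ n - v`, so that both components are compared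
through counts of small elements. -/
def encode (σ : Perm (Fin n)) : Finset (Fin n) × Finset (Fin n) :=
  (insert 0 (-nonLRMinVal σ), nonLRMinPos σ)

lemma zero_notMem_neg_nonLRMinVal (σ : Perm (Fin n)) : (0 : Fin n) ∉ -nonLRMinVal σ := by
  rw [mem_neg', neg_zero, nonLRMinVal, mem_map]
  rintro ⟨p, hp, hp0⟩
  exact (mem_nonLRMinPos.1 hp).apply_ne_zero hp0

lemma card_encode_fst (σ : Perm (Fin n)) : #(encode σ).1 = #(nonLRMinPos σ) + 1 := by
  rw [encode, card_insert_of_notMem (zero_notMem_neg_nonLRMinVal σ), card_neg, card_nonLRMinVal]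

lemma countBelow_encode_fst (σ : Perm (Fin n)) {t : ℕ} (ht : 0 < t) (htn : t ≤ n) :
    countBelow (encode σ).1 t = #{p | IsNonLRMin σ p ∧ n + 1 - t ≤ (σ p : ℕ)} + 1 := by
  rw [encode, ← countBelow_erase (mem_insert_self 0 _),
    erase_insert (zero_notMem_neg_nonLRMinVal σ), Fin.val_zero, if_pos ht]
  refine congrArg (· + 1) (card_equiv (σ.trans (Equiv.neg _)) fun p => ?_).symm
  simp only [mem_filter, mem_univ, true_and, coe_trans, Function.comp_apply, Equiv.neg_apply,
    mem_neg', neg_neg, apply_mem_nonLRMinVal]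
  refine and_congr_right fun hp => ?_
  rw [Fin.val_neg, if_neg hp.apply_ne_zero]
  have := (σ p).isLt
  omega

theorem dominates_encode (σ : Perm (Fin n)) : Dominates (encode σ).1 (encode σ).2 := by
  intro t ht htn
  obtain ⟨i, hit, hi⟩ : ∃ i : Fin n, (i : ℕ) < t ∧ (σ i : ℕ) < n + 1 - t := by
    by_contra! h
    have hsub : ({p | (p : ℕ) < t} : Finset (Fin n)) ⊆
        ({p | n + 1 - t ≤ (σ p : ℕ)} : Finset (Fin n)) := by
      intro p hp
      simp only [mem_filter, mem_univ, true_and] at hp ⊢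
      exact h p hp
    have := card_le_card hsub
    rw [Fin.card_filter_val_lt, card_filter_le_apply] at this
    omega
  have hprefix : #{p | ¬IsNonLRMin σ p ∧ p ≤ i} ≤ #{p | ¬IsNonLRMin σ p ∧ (p : ℕ) < t} :=
    card_le_card fun p hp => by
      simp only [mem_filter, mem_univ, true_and] at hp ⊢
      exact ⟨hp.1, lt_of_le_of_lt (Fin.le_def.1 hp.2) hit⟩
  have hkey := card_lrMin_val_ge_lt_card_lrMin_le σ hi
  have hpos := card_lrMin_lt_add_countBelow σ htn
  have hval := card_nonLRMin_val_ge_add_card_lrMin_val_ge σ (n + 1 - t)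
  rw [countBelow_encode_fst σ ht htn]
  change countBelow (nonLRMinPos σ) t < _
  omega

end Encoding

section Injectivity

variable {σ τ : Perm (Fin n)} {i₀ : Fin n}

lemma lt_of_apply_eq_of_eqOn (hpre : ∀ j < i₀, σ j = τ j) (hne : σ i₀ ≠ τ i₀) {p : Fin n}
    (hp : σ p = τ i₀) : i₀ < p := by
  refine lt_of_not_ge fun hpi => ?_
  rcases hpi.lt_or_eq with hpi | rfl
  · exact hpi.ne (τ.injective (hpre p hpi ▸ hp))
  · exact hne hp

/-- At the first position `i₀` where they differ: if `i₀` is not a left-to-right minimum, its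
witness, `i₀` and the later position of `σ i₀` in `τ` form a 132 in `τ`; otherwise the later
position of `τ i₀` in `σ` is not a left-to-right minimum of `σ`, so neither is `i₀` for `τ`. -/
lemma false_of_lt_of_eqOn (hτ : Avoids132 n τ) (hpos : nonLRMinPos σ = nonLRMinPos τ)
    (hval : nonLRMinVal σ = nonLRMinVal τ) (hpre : ∀ j < i₀, σ j = τ j) (hlt : σ i₀ < τ i₀) :
    False := by
  by_cases hi₀ : IsNonLRMin σ i₀
  · obtain ⟨j, hj, hji⟩ := hi₀
    have hp := lt_of_apply_eq_of_eqOn (σ := τ) (τ := σ) (fun j hj => (hpre j hj).symm)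
      hlt.ne' (τ.apply_symm_apply (σ i₀))
    exact hτ j i₀ _ hj hp ⟨by rw [τ.apply_symm_apply, ← hpre j hj]; exact hji,
      by rw [τ.apply_symm_apply]; exact hlt⟩
  · have hr := lt_of_apply_eq_of_eqOn hpre hlt.ne (σ.apply_symm_apply (τ i₀))
    have hrNM : IsNonLRMin σ (σ.symm (τ i₀)) := ⟨i₀, hr, by rw [σ.apply_symm_apply]; exact hlt⟩
    rw [← apply_mem_nonLRMinVal, σ.apply_symm_apply, hval, apply_mem_nonLRMinVal,
      ← mem_nonLRMinPos, ← hpos, mem_nonLRMinPos] at hrNM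
    exact hi₀ hrNM

theorem eq_of_encode_eq [NeZero n] (hσ : Avoids132 n σ) (hτ : Avoids132 n τ)
    (h : encode σ = encode τ) : σ = τ := by
  have hpos : nonLRMinPos σ = nonLRMinPos τ := congrArg Prod.snd h
  have hval : nonLRMinVal σ = nonLRMinVal τ := by
    have h1 := congrArg (fun p => -(p.1.erase 0)) h
    simpa only [encode, erase_insert (zero_notMem_neg_nonLRMinVal _), neg_neg] using h1
  by_contra hne
  obtain ⟨i₀, hi₀, hmin⟩ := exists_min_image {i | σ i ≠ τ i} id <| by
    by_contra hempty
    simp only [not_nonempty_iff_eq_empty, filter_eq_empty_iff, mem_univ, not_not,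
      true_implies] at hempty
    exact hne (Equiv.ext hempty)
  simp only [mem_filter, mem_univ, true_and, id] at hi₀ hmin
  have hpre : ∀ j < i₀, σ j = τ j := fun j hj => by_contra fun h => (hmin j h).not_gt hj
  rcases lt_or_gt_of_ne hi₀ with hlt | hgt
  · exact false_of_lt_of_eqOn hτ hpos hval hpre hlt
  · exact false_of_lt_of_eqOn hσ hpos.symm hval.symm (fun j hj => (hpre j hj).symm) hgt

end Injectivity

section Insertion

variable {m : ℕ} {q w : Fin (m + 1)} {τ : Perm (Fin m)}

def insertAt (q w : Fin (m + 1)) (τ : Perm (Fin m)) : Perm (Fin (m + 1)) :=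
  (finSuccEquiv' q).trans (τ.optionCongr.trans (finSuccEquiv' w).symm)

@[simp] lemma insertAt_apply_self : insertAt q w τ q = w := by
  simp [insertAt]

@[simp] lemma insertAt_apply_succAbove (j : Fin m) :
    insertAt q w τ (q.succAbove j) = w.succAbove (τ j) := by
  simp [insertAt]

lemma succAbove_lt_iff_val_lt {j : Fin m} : q.succAbove j < q ↔ (j : ℕ) < q := by
  rw [Fin.succAbove_lt_iff_castSucc_lt, Fin.lt_def, Fin.val_castSucc]

lemma insertAt_succAbove_lt_iff {j : Fin m} :
    insertAt q w τ (q.succAbove j) < w ↔ (τ j : ℕ) < w := by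
  rw [insertAt_apply_succAbove, succAbove_lt_iff_val_lt]

lemma lt_insertAt_succAbove_iff {j : Fin m} :
    w < insertAt q w τ (q.succAbove j) ↔ (w : ℕ) ≤ τ j := by
  rw [insertAt_apply_succAbove, Fin.lt_succAbove_iff_le_castSucc, Fin.le_def, Fin.val_castSucc]

lemma isNonLRMin_insertAt_succAbove (hq : IsNonLRMin (insertAt q w τ) q) (j : Fin m) :
    IsNonLRMin (insertAt q w τ) (q.succAbove j) ↔ IsNonLRMin τ j := by
  rw [isNonLRMin_iff_exists_ne hq]
  constructor
  · rintro ⟨l, hlq, hl, hlt⟩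
    obtain ⟨l, rfl⟩ := Fin.exists_succAbove_eq hlq
    rw [insertAt_apply_succAbove, insertAt_apply_succAbove, Fin.succAbove_lt_succAbove_iff] at hlt
    exact ⟨l, Fin.succAbove_lt_succAbove_iff.1 hl, hlt⟩
  · rintro ⟨l, hl, hlt⟩
    refine ⟨q.succAbove l, Fin.succAbove_ne q l, Fin.succAbove_lt_succAbove_iff.2 hl, ?_⟩
    rwa [insertAt_apply_succAbove, insertAt_apply_succAbove, Fin.succAbove_lt_succAbove_iff]

lemma nonLRMinPos_insertAt (hq : IsNonLRMin (insertAt q w τ) q) :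
    nonLRMinPos (insertAt q w τ) = insert q ((nonLRMinPos τ).map q.succAboveEmb) := by
  ext i
  rcases eq_or_ne i q with rfl | hi
  · simpa using hq
  · obtain ⟨j, rfl⟩ := Fin.exists_succAbove_eq hi
    simp [isNonLRMin_insertAt_succAbove hq]

lemma nonLRMinVal_insertAt (hq : IsNonLRMin (insertAt q w τ) q) :
    nonLRMinVal (insertAt q w τ) = insert w ((nonLRMinVal τ).map w.succAboveEmb) := by
  simp only [nonLRMinVal, nonLRMinPos_insertAt hq, map_insert, map_map]
  congr 1
  · simp
  · congr 1
    ext j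
    simp

lemma neg_succAbove [NeZero m] {v : Fin m} (hw : w ≠ 0) (hwv : (w : ℕ) ≤ v) :
    -(w.succAbove v) = (-w).succAbove (-v) := by
  have hw0 : 0 < (w : ℕ) := Fin.pos_iff_ne_zero.2 hw
  have hv : v ≠ 0 := Fin.ne_of_val_ne (by rw [Fin.val_zero]; omega)
  have hsucc : (w.succAbove v : ℕ) = v + 1 := by rw [val_succAbove, if_neg (by omega)]
  have hne : w.succAbove v ≠ 0 := Fin.ne_of_val_ne (by rw [hsucc, Fin.val_zero]; omega)
  have hnv : ((-v : Fin m) : ℕ) = m - v := by rw [Fin.val_neg, if_neg hv]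
  have hnw : ((-w : Fin (m + 1)) : ℕ) = m + 1 - w := by rw [Fin.val_neg, if_neg hw]
  have := v.isLt
  apply Fin.ext
  rw [Fin.val_neg, if_neg hne, hsucc, val_succAbove, hnv, hnw, if_pos (by omega)]
  omega

lemma encode_insertAt [NeZero m] (hq : IsNonLRMin (insertAt q w τ) q) (hw : w ≠ 0)
    (hge : ∀ v ∈ nonLRMinVal τ, (w : ℕ) ≤ v) :
    encode (insertAt q w τ) = (insert (-w) ((encode τ).1.map (-w).succAboveEmb),
      insert q ((encode τ).2.map q.succAboveEmb)) := by
  have hneg : -((nonLRMinVal τ).map w.succAboveEmb) = (-nonLRMinVal τ).map (-w).succAboveEmb := by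
    simp only [map_eq_image, ← image_neg_eq_neg, image_image]
    exact image_congr fun v hv => neg_succAbove hw (hge v hv)
  rw [encode, encode, nonLRMinPos_insertAt hq, nonLRMinVal_insertAt hq, neg_insert, hneg,
    map_insert, Fin.coe_succAboveEmb, Fin.succAbove_ne_zero_zero (neg_ne_zero.2 hw),
    insert_comm]

lemma avoids132_insertAt (hτ : Avoids132 m τ) (hq : IsNonLRMin (insertAt q w τ) q)
    (hmid : ∀ i j, i < j → j < q → ¬(insertAt q w τ i < w ∧ w < insertAt q w τ j))
    (hmin : ∀ i ≠ q, IsNonLRMin (insertAt q w τ) i → w < insertAt q w τ i) :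
    Avoids132 (m + 1) (insertAt q w τ) := by
  have hoff : ∀ a b c, a < b → b < c → a ≠ q → b ≠ q → c ≠ q →
      ¬(insertAt q w τ a < insertAt q w τ c ∧ insertAt q w τ c < insertAt q w τ b) := by
    intro a b c hab hbc ha hb hc
    obtain ⟨a, rfl⟩ := Fin.exists_succAbove_eq ha
    obtain ⟨b, rfl⟩ := Fin.exists_succAbove_eq hb
    obtain ⟨c, rfl⟩ := Fin.exists_succAbove_eq hc
    simp only [insertAt_apply_succAbove, Fin.succAbove_lt_succAbove_iff] at hab hbc ⊢
    exact hτ a b c hab hbc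
  rintro a b c hab hbc ⟨hac, hcb⟩
  rcases eq_or_ne a q with rfl | ha
  · obtain ⟨j, hj, hjq⟩ := hq
    exact hoff j b c (hj.trans hab) hbc hj.ne hab.ne' (hab.trans hbc).ne' ⟨hjq.trans hac, hcb⟩
  rcases eq_or_ne b q with rfl | hb
  · rw [insertAt_apply_self] at hcb
    exact (hmin c hbc.ne' ⟨a, hab.trans hbc, hac⟩).not_gt hcb
  rcases eq_or_ne c q with rfl | hc
  · rw [insertAt_apply_self] at hac hcb
    exact hmid a b hab hbc ⟨hac, hcb⟩
  exact hoff a b c hab hbc ha hb hc ⟨hac, hcb⟩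

end Insertion

section Existence

lemma zero_mem_of_dominates [NeZero n] {A B : Finset (Fin n)} (h : Dominates A B) :
    (0 : Fin n) ∈ A := by
  obtain ⟨a, ha⟩ := card_pos.1 ((Nat.zero_le _).trans_lt (h 1 one_pos NeZero.one_le))
  rw [mem_filter] at ha
  exact (Fin.ext (Nat.lt_one_iff.1 ha.2) : a = 0) ▸ ha.1

theorem exists_encode_eq_of_card_eq_one [NeZero n] {A B : Finset (Fin n)} (hA : #A = 1)
    (hB : #B = 0) (h : Dominates A B) : ∃ σ, Avoids132 n σ ∧ encode σ = (A, B) := by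
  have hpos : nonLRMinPos (Fin.revPerm : Perm (Fin n)) = ∅ := by
    refine eq_empty_of_forall_notMem fun i hi => ?_
    obtain ⟨j, hj, hji⟩ := mem_nonLRMinPos.1 hi
    rw [Fin.revPerm_apply, Fin.revPerm_apply, Fin.rev_lt_rev] at hji
    exact hj.not_gt hji
  refine ⟨Fin.revPerm, fun a b c hab hbc ⟨hac, _⟩ => ?_, ?_⟩
  · rw [Fin.revPerm_apply, Fin.revPerm_apply, Fin.rev_lt_rev] at hac
    exact hac.not_gt (hab.trans hbc)
  · obtain ⟨a, rfl⟩ := card_eq_one.1 hA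
    obtain rfl := mem_singleton.1 (zero_mem_of_dominates h)
    rw [card_eq_zero.1 hB, encode, hpos, nonLRMinVal, hpos]
    simp

variable {m : ℕ} {A B : Finset (Fin (m + 1))} {a q : Fin (m + 1)}

lemma dominates_deleteAt (ha : a ∈ A) (hmax : ∀ x ∈ A, x ≤ a) (hq : q ∈ B)
    (hcard : #A = #B + 1) (h : Dominates A B) : Dominates (deleteAt a A) (deleteAt q B) := by
  intro t ht htm
  have hA : (a : ℕ) < t → countBelow (deleteAt a A) t + 1 = #A := fun hat => by
    rw [countBelow_deleteAt_of_lt ha hat,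
      countBelow_eq_card fun x hx => (Fin.le_def.1 (hmax x hx)).trans_lt (by omega)]
  rcases le_or_gt t q with htq | hqt
  · rw [countBelow_deleteAt_of_le B htq]
    rcases le_or_gt t a with hta | hat
    · rw [countBelow_deleteAt_of_le A hta]
      exact h t ht (by omega)
    · have := hA hat
      have := countBelow_lt_card hq htq
      omega
  · have hB := countBelow_deleteAt_of_lt hq hqt
    have hBle := countBelow_le_card B (t + 1)
    rcases le_or_gt t a with hta | hat
    · rw [countBelow_deleteAt_of_le A hta]
      have := h (t + 1) (by omega) (by omega)
      have := countBelow_succ_le A t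
      omega
    · have := hA hat
      omega

/-- In the permutation to be built, `a + countBelow B b < b + #B` says that some left-to-right
minimum before `b` lies below the inserted value `n - a`. -/
lemma exists_min_insertionPoint (ha : a ∈ A) (ha0 : 0 < (a : ℕ)) (hcard : #A = #B + 1)
    (h : Dominates A B) : ∃ q ∈ B, (a : ℕ) + countBelow B q < q + #B ∧
      ∀ b ∈ B, (a : ℕ) + countBelow B b < b + #B → q ≤ b := by
  obtain ⟨b, hb, hab⟩ : ∃ b ∈ B, (a : ℕ) ≤ b := by
    by_contra! hall
    have := h a ha0 a.isLt.le
    rw [countBelow_eq_card hall] at this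
    have := countBelow_lt_card ha le_rfl
    omega
  have hne : {b ∈ B | (a : ℕ) + countBelow B b.1 < b.1 + #B}.Nonempty :=
    ⟨b, mem_filter.2 ⟨hb, by have := countBelow_lt_card hb le_rfl; omega⟩⟩
  obtain ⟨q, hq, hmin⟩ := exists_min_image _ id hne
  rw [mem_filter] at hq
  exact ⟨q, hq.1, hq.2, fun b hb hQ => hmin b (mem_filter.2 ⟨hb, hQ⟩)⟩

variable {τ : Perm (Fin m)}

lemma le_val_of_mem_nonLRMinVal [NeZero m] (hmax : ∀ x ∈ A, x ≤ a)
    (hτ : (encode τ).1 = deleteAt a A)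
    {v : Fin m} (hv : v ∈ nonLRMinVal τ) : m + 1 - a ≤ (v : ℕ) := by
  have hv0 : v ≠ 0 := fun h0 =>
    zero_notMem_neg_nonLRMinVal τ (mem_neg'.2 (by rwa [neg_zero, ← h0]))
  have hmem : -v ∈ deleteAt a A := hτ ▸ mem_insert_of_mem (neg_mem_neg hv)
  rw [deleteAt, mem_filter] at hmem
  have hlt : a.succAbove (-v) < a :=
    lt_of_le_of_ne (hmax _ hmem.2) (Fin.succAbove_ne a (-v))
  rw [succAbove_lt_iff_val_lt, Fin.val_neg, if_neg hv0] at hlt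
  have := v.isLt
  omega

lemma card_lrMin_val_ge_add_card_nonLRMinPos [NeZero m] (hmax : ∀ x ∈ A, x ≤ a)
    (hτ : (encode τ).1 = deleteAt a A) (ha : a ≠ 0) :
    #{p | ¬IsNonLRMin τ p ∧ m + 1 - a ≤ (τ p : ℕ)} + #(nonLRMinPos τ) + 1 = a := by
  have h := card_nonLRMin_val_ge_add_card_lrMin_val_ge τ (m + 1 - a)
  have hNM : #{p | IsNonLRMin τ p ∧ m + 1 - a ≤ (τ p : ℕ)} = #(nonLRMinPos τ) :=
    congrArg card <| filter_congr fun p _ =>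
      ⟨And.left, fun hp => ⟨hp, le_val_of_mem_nonLRMinVal hmax hτ (apply_mem_nonLRMinVal.2 hp)⟩⟩
  have ha0 : (a : ℕ) ≠ 0 := fun h0 => ha (Fin.ext h0)
  have := a.isLt
  omega

lemma exists_apply_lt_before_insertionPoint (hpos : nonLRMinPos τ = deleteAt q B)
    (hcount : #{p | ¬IsNonLRMin τ p ∧ m + 1 - a ≤ (τ p : ℕ)} + #B = a)
    (hqQ : (a : ℕ) + countBelow B q < q + #B) :
    ∃ j : Fin m, (j : ℕ) < q ∧ (τ j : ℕ) < m + 1 - a := by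
  by_contra! hall
  have hsub : ({p | ¬IsNonLRMin τ p ∧ (p : ℕ) < q} : Finset (Fin m)) ⊆
      ({p | ¬IsNonLRMin τ p ∧ m + 1 - a ≤ (τ p : ℕ)} : Finset (Fin m)) := fun p hp => by
    simp only [mem_filter, mem_univ, true_and] at hp ⊢
    exact ⟨hp.1, hall p hp.2⟩
  have h1 := card_le_card hsub
  have h2 := card_lrMin_lt_add_countBelow τ (t := q) (by have := q.isLt; omega)
  rw [hpos, countBelow_deleteAt_of_le B le_rfl] at h2
  omega

lemma apply_lt_of_apply_lt_before_insertionPoint (hpos : nonLRMinPos τ = deleteAt q B)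
    (hcount : #{p | ¬IsNonLRMin τ p ∧ m + 1 - a ≤ (τ p : ℕ)} + #B = a)
    (hqmin : ∀ b ∈ B, (a : ℕ) + countBelow B b < b + #B → q ≤ b) {i j : Fin m} (hij : i < j)
    (hjq : (j : ℕ) < q) (hi : (τ i : ℕ) < m + 1 - a) : (τ j : ℕ) < m + 1 - a := by
  by_contra! hj
  have hjB : q.succAbove j ∈ B := by
    have : j ∈ nonLRMinPos τ := mem_nonLRMinPos.2 ⟨i, hij, by rw [Fin.lt_def]; omega⟩
    rw [hpos, deleteAt, mem_filter] at this
    exact this.2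
  have hval : (q.succAbove j : ℕ) = j := by rw [val_succAbove, if_pos hjq]
  have h1 := card_lrMin_val_ge_lt_card_lrMin_le τ hi
  have h2 : #{p | ¬IsNonLRMin τ p ∧ p ≤ i} ≤ #{p | ¬IsNonLRMin τ p ∧ (p : ℕ) < j} :=
    card_le_card fun p hp => by
      simp only [mem_filter, mem_univ, true_and] at hp ⊢
      exact ⟨hp.1, lt_of_le_of_lt (Fin.le_def.1 hp.2) hij⟩
  have h3 := card_lrMin_lt_add_countBelow τ j.isLt.le
  rw [hpos, countBelow_deleteAt_of_le B hjq.le] at h3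
  have := hqmin _ hjB (by rw [hval]; omega)
  rw [Fin.le_def, hval] at this
  omega

theorem avoids132_insertAt_and_encode_eq [NeZero m] (hτ : Avoids132 m τ)
    (hτenc : encode τ = (deleteAt a A, deleteAt q B)) (ha : a ∈ A) (hmax : ∀ x ∈ A, x ≤ a)
    (ha0 : a ≠ 0) (hq : q ∈ B) (hqQ : (a : ℕ) + countBelow B q < q + #B)
    (hqmin : ∀ b ∈ B, (a : ℕ) + countBelow B b < b + #B → q ≤ b) :
    Avoids132 (m + 1) (insertAt q (-a) τ) ∧ encode (insertAt q (-a) τ) = (A, B) := by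
  have hτA : (encode τ).1 = deleteAt a A := congrArg Prod.fst hτenc
  have hτB : nonLRMinPos τ = deleteAt q B := congrArg Prod.snd hτenc
  have hcount : #{p | ¬IsNonLRMin τ p ∧ m + 1 - a ≤ (τ p : ℕ)} + #B = a := by
    have := card_lrMin_val_ge_add_card_nonLRMinPos hmax hτA ha0
    rw [hτB] at this
    have := card_deleteAt hq
    omega
  have hw : ((-a : Fin (m + 1)) : ℕ) = m + 1 - a := by rw [Fin.val_neg, if_neg ha0]
  have hqNM : IsNonLRMin (insertAt q (-a) τ) q := by
    obtain ⟨j, hjq, hjw⟩ := exists_apply_lt_before_insertionPoint hτB hcount hqQ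
    refine ⟨q.succAbove j, succAbove_lt_iff_val_lt.2 hjq, ?_⟩
    rwa [insertAt_apply_self, insertAt_succAbove_lt_iff, hw]
  refine ⟨avoids132_insertAt hτ hqNM ?_ ?_, ?_⟩
  · rintro i j hij hjq ⟨hi, hj⟩
    obtain ⟨i, rfl⟩ := Fin.exists_succAbove_eq (hij.trans hjq).ne
    obtain ⟨j, rfl⟩ := Fin.exists_succAbove_eq hjq.ne
    rw [Fin.succAbove_lt_succAbove_iff] at hij
    rw [succAbove_lt_iff_val_lt] at hjq
    rw [insertAt_succAbove_lt_iff, hw] at hi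
    rw [lt_insertAt_succAbove_iff, hw] at hj
    exact (apply_lt_of_apply_lt_before_insertionPoint hτB hcount hqmin hij hjq hi).not_ge hj
  · intro i hiq hiNM
    obtain ⟨j, rfl⟩ := Fin.exists_succAbove_eq hiq
    rw [isNonLRMin_insertAt_succAbove hqNM] at hiNM
    rw [lt_insertAt_succAbove_iff, hw]
    exact le_val_of_mem_nonLRMinVal hmax hτA (apply_mem_nonLRMinVal.2 hiNM)
  · rw [encode_insertAt hqNM (neg_ne_zero.2 ha0) fun v hv => hw ▸ le_val_of_mem_nonLRMinVal
      hmax hτA hv, hτenc, neg_neg, map_deleteAt, map_deleteAt, insert_erase ha, insert_erase hq]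

theorem exists_avoids132_encode_eq : ∀ (k : ℕ) {n : ℕ} [NeZero n] {A B : Finset (Fin n)},
    #A = k + 1 → #B = k → Dominates A B → ∃ σ, Avoids132 n σ ∧ encode σ = (A, B)
  | 0, _, _, _, _, hA, hB, h => exists_encode_eq_of_card_eq_one hA hB h
  | k + 1, n, _, A, B, hA, hB, h => by
    obtain ⟨m, rfl⟩ : ∃ m, n = m + 1 := ⟨n - 1, (Nat.sub_add_cancel NeZero.one_le).symm⟩
    obtain ⟨a, ha, hmax⟩ : ∃ a ∈ A, ∀ x ∈ A, x ≤ a := exists_max_image A id (card_pos.1 (by omega))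
    have ha0 : a ≠ 0 := by
      rintro rfl
      have := card_le_card fun x hx => mem_singleton.2 (nonpos_iff_eq_zero.1 (hmax x hx))
      rw [card_singleton] at this
      omega
    have : NeZero m := ⟨by rintro rfl; exact ha0 (Fin.fin_one_eq_zero a)⟩
    obtain ⟨q, hq, hqQ, hqmin⟩ := exists_min_insertionPoint ha (Fin.pos_iff_ne_zero.2 ha0)
      (by omega) h
    obtain ⟨τ, hτ, hτenc⟩ := exists_avoids132_encode_eq k (A := deleteAt a A) (B := deleteAt q B)
      (by have := card_deleteAt ha; omega) (by have := card_deleteAt hq; omega)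
      (dominates_deleteAt ha hmax hq (by omega) h)
    exact ⟨_, avoids132_insertAt_and_encode_eq hτ hτenc ha hmax ha0 hq hqQ hqmin⟩

end Existence

section CycleLemma

variable [NeZero n]

lemma mem_map_subRight {X : Finset (Fin n)} {c x : Fin n} :
    x ∈ X.map (Equiv.subRight c).toEmbedding ↔ x + c ∈ X := by
  rw [mem_map_equiv]
  rfl

def periodicCount (X : Finset (Fin n)) (t : ℕ) : ℕ :=
  ∑ p ∈ range t, if Fin.ofNat n p ∈ X then 1 else 0

lemma periodicCount_add (X : Finset (Fin n)) (s t : ℕ) :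
    periodicCount X (s + t) =
      periodicCount X s + periodicCount (X.map (Equiv.subRight (Fin.ofNat n s)).toEmbedding) t := by
  rw [periodicCount, sum_range_add]
  congr 1
  refine sum_congr rfl fun p _ => ?_
  have hadd : Fin.ofNat n (s + p) = Fin.ofNat n p + Fin.ofNat n s := by
    ext
    simp [Fin.val_add, Nat.add_mod, add_comm]
  simp only [mem_map_subRight, hadd]

lemma periodicCount_eq_countBelow (X : Finset (Fin n)) {t : ℕ} (ht : t ≤ n) :
    periodicCount X t = countBelow X t := by
  rw [periodicCount, sum_boole, Nat.cast_id, countBelow]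
  have hval : ∀ p < t, (Fin.ofNat n p : ℕ) = p := fun p hp =>
    by rw [Fin.val_ofNat, Nat.mod_eq_of_lt (by omega)]
  refine card_nbij' (Fin.ofNat n) Fin.val (fun p hp => ?_) (fun i hi => ?_)
    (fun p hp => hval p (mem_range.1 (mem_filter.1 hp).1)) (fun i _ => Fin.ofNat_val_eq_self i)
  · rw [mem_coe, mem_filter, mem_range] at hp
    exact mem_filter.2 ⟨hp.2, (hval p hp.1).symm ▸ hp.1⟩
  · rw [mem_coe, mem_filter] at hi
    exact mem_filter.2 ⟨mem_range.2 hi.2, (Fin.ofNat_val_eq_self i).symm ▸ hi.1⟩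

lemma periodicCount_n_add (X : Finset (Fin n)) (t : ℕ) :
    periodicCount X (n + t) = #X + periodicCount X t := by
  have hX : X.map (Equiv.subRight (Fin.ofNat n n)).toEmbedding = X := by
    ext x
    rw [mem_map_subRight, Fin.ofNat_self, add_zero]
  rw [periodicCount_add, periodicCount_eq_countBelow X le_rfl, countBelow_of_le X le_rfl, hX]

def walk (X Y : Finset (Fin n)) (t : ℕ) : ℤ := periodicCount X t - periodicCount Y t

variable {X Y : Finset (Fin n)}

lemma walk_n_add (hc : #X = #Y + 1) (t : ℕ) : walk X Y (n + t) = walk X Y t + 1 := by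
  simp only [walk, periodicCount_n_add, hc]
  push_cast
  ring

lemma dominates_map_subRight_iff (s : Fin n) :
    Dominates (X.map (Equiv.subRight s).toEmbedding) (Y.map (Equiv.subRight s).toEmbedding) ↔
      ∀ t, 0 < t → t ≤ n → walk X Y s < walk X Y (s + t) := by
  refine forall₃_congr fun t _ ht => ?_
  have hX := periodicCount_add X s t
  have hY := periodicCount_add Y s t
  rw [Fin.ofNat_val_eq_self, periodicCount_eq_countBelow _ ht] at hX hY
  rw [walk, walk, hX, hY]
  omega

/-- Take for `s` the last minimum of the walk over one period, i.e. minimise `n * walk s - s`. -/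
lemma exists_walk_lt (hc : #X = #Y + 1) :
    ∃ s < n, ∀ t, 0 < t → t ≤ n → walk X Y s < walk X Y (s + t) := by
  obtain ⟨s, hs, hmin⟩ := exists_min_image (range n) (fun s => n * walk X Y s - s)
    ⟨0, mem_range.2 (NeZero.pos n)⟩
  rw [mem_range] at hs
  refine ⟨s, hs, fun t ht htn => ?_⟩
  rcases lt_or_ge (s + t) n with hst | hst
  · have := hmin (s + t) (mem_range.2 hst)
    push_cast at this
    nlinarith
  · obtain ⟨r, hr⟩ : ∃ r, s + t = n + r := ⟨s + t - n, by omega⟩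
    have := hmin r (mem_range.2 (by omega))
    rw [hr, walk_n_add hc]
    have : (r : ℤ) < s + 1 := by omega
    nlinarith

lemma eq_of_walk_lt (hc : #X = #Y + 1) {s s' : ℕ} (hs : s < n) (hs' : s' < n)
    (h : ∀ t, 0 < t → t ≤ n → walk X Y s < walk X Y (s + t))
    (h' : ∀ t, 0 < t → t ≤ n → walk X Y s' < walk X Y (s' + t)) : s = s' := by
  wlog hlt : s < s' generalizing s s'
  · rcases (not_lt.1 hlt).lt_or_eq with hgt | heq
    · exact (this hs' hs h' h hgt).symm
    · exact heq.symm
  have h1 := h (s' - s) (by omega) (by omega)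
  have h2 := h' (n + s - s') (by omega) (by omega)
  rw [show s + (s' - s) = s' by omega] at h1
  rw [show s' + (n + s - s') = n + s by omega, walk_n_add hc] at h2
  omega

lemma map_subRight_map_addRight (X : Finset (Fin n)) (c : Fin n) :
    (X.map (Equiv.addRight c).toEmbedding).map (Equiv.subRight c).toEmbedding = X := by
  ext x
  rw [mem_map_subRight, mem_map_equiv]
  simp

lemma map_addRight_map_subRight (X : Finset (Fin n)) (c : Fin n) :
    (X.map (Equiv.subRight c).toEmbedding).map (Equiv.addRight c).toEmbedding = X := by
  ext x
  rw [mem_map_equiv, mem_map_subRight]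
  simp

lemma exists_dominates_map_subRight (hc : #X = #Y + 1) :
    ∃ s : Fin n,
      Dominates (X.map (Equiv.subRight s).toEmbedding) (Y.map (Equiv.subRight s).toEmbedding) := by
  obtain ⟨s, hs, hgood⟩ := exists_walk_lt hc
  exact ⟨⟨s, hs⟩, (dominates_map_subRight_iff _).2 hgood⟩

lemma eq_of_dominates_map_subRight (hc : #X = #Y + 1) {s s' : Fin n}
    (h : Dominates (X.map (Equiv.subRight s).toEmbedding) (Y.map (Equiv.subRight s).toEmbedding))
    (h' : Dominates (X.map (Equiv.subRight s').toEmbedding)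
      (Y.map (Equiv.subRight s').toEmbedding)) : s = s' :=
  Fin.ext <| eq_of_walk_lt hc s.isLt s'.isLt ((dominates_map_subRight_iff s).1 h)
    ((dominates_map_subRight_iff s').1 h')

theorem card_mul_card_ballotPairs (k : ℕ) :
    n * Nat.card (ballotPairs n k) = n.choose (k + 1) * n.choose k := by
  let rotate : Fin n × ballotPairs n k →
      {X : Finset (Fin n) // #X = k + 1} × {Y : Finset (Fin n) // #Y = k} := fun x =>
    (⟨x.2.1.1.map (Equiv.addRight x.1).toEmbedding, by rw [card_map]; exact x.2.2.1⟩,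
      ⟨x.2.1.2.map (Equiv.addRight x.1).toEmbedding, by rw [card_map]; exact x.2.2.2.1⟩)
  have hinj : Function.Injective rotate := by
    rintro ⟨s, ⟨A, B⟩, hA, hB, hAB⟩ ⟨s', ⟨A', B'⟩, hA', hB', hAB'⟩ h
    simp only [rotate, Prod.mk.injEq, Subtype.mk.injEq] at h
    obtain ⟨hX, hY⟩ := h
    dsimp only at hA hB hAB hAB'
    obtain rfl : s = s' := eq_of_dominates_map_subRight (X := A.map (Equiv.addRight s).toEmbedding)
      (Y := B.map (Equiv.addRight s).toEmbedding) (by simp only [card_map]; omega)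
      (by rwa [map_subRight_map_addRight, map_subRight_map_addRight])
      (by rwa [hX, hY, map_subRight_map_addRight, map_subRight_map_addRight])
    rw [(map_injective _).eq_iff] at hX hY
    simp only [hX, hY]
  have hsurj : Function.Surjective rotate := by
    rintro ⟨⟨X, hX⟩, ⟨Y, hY⟩⟩
    obtain ⟨s, hs⟩ := exists_dominates_map_subRight (X := X) (Y := Y) (by omega)
    refine ⟨(s, ⟨(X.map (Equiv.subRight s).toEmbedding, Y.map (Equiv.subRight s).toEmbedding),
      by rw [card_map, hX], by rw [card_map, hY], hs⟩), ?_⟩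
    simp only [rotate, map_addRight_map_subRight]
  have h := Nat.card_eq_of_bijective rotate ⟨hinj, hsurj⟩
  simpa only [Nat.card_prod, Nat.card_eq_fintype_card, Fintype.card_prod, Fintype.card_fin,
    Fintype.card_finset_len] using h

end CycleLemma

theorem card_avoids132_eq_card_ballotPairs [NeZero n] (k : ℕ) :
    Nat.card {σ : Perm (Fin n) | Avoids132 n σ ∧ #(nonLRMinPos σ) = k} =
      Nat.card (ballotPairs n k) := by
  refine Nat.card_eq_of_bijective (fun σ => ⟨encode σ.1, ?_, σ.2.2, dominates_encode σ.1⟩)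
    ⟨fun σ τ h => Subtype.ext (eq_of_encode_eq σ.2.1 τ.2.1 (congrArg Subtype.val h)), ?_⟩
  · rw [card_encode_fst, σ.2.2]
  · rintro ⟨⟨A, B⟩, hA, hB, hAB⟩
    obtain ⟨σ, hσ, henc⟩ := exists_avoids132_encode_eq k hA hB hAB
    exact ⟨⟨σ, hσ, by rw [← hB, ← congrArg Prod.snd henc]; rfl⟩, Subtype.ext henc⟩

end Avoid132

open Avoid132 in
theorem card_mmp0010_eq_narayana_general (n k : ℕ) :
    n * Nat.card {σ : Equiv.Perm (Fin n) | Avoids132 n σ ∧ mmp n 0 0 1 0 σ = k} =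
    n.choose k * n.choose (k + 1) := by
  rcases n.eq_zero_or_pos with rfl | hn
  · simp
  have : NeZero n := ⟨hn.ne'⟩
  simp only [mmp_zero_zero_one_zero]
  rw [card_avoids132_eq_card_ballotPairs, card_mul_card_ballotPairs, mul_comm]

/-- The number of 132-avoiding permutations of `{1,…,n}` with `mmp(0,0,1,0)(σ) = k`
equals the Narayana number `N(n,k+1) = (1/n) * choose n k * choose n (k+1)`
(stated multiplied through by `n` to avoid rational arithmetic). -/
theorem card_mmp0010_eq_narayana (n k : ℕ) (hn : 1 ≤ n) (hk : k ≤ n - 1) :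
    n * Nat.card {σ : Equiv.Perm (Fin n) | Avoids132 n σ ∧ mmp n 0 0 1 0 σ = k} =
    n.choose k * n.choose (k + 1) :=
  card_mmp0010_eq_narayana_general n k
end
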